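/- arXiv:1904.07068 — 8 statements merged into one kernel-verified Lean document; each statement's English description precedes it below -/
import Mathlib

section
/- For any field K, the space χ(K) of all orderings of K, equipped with the Harrison topology, is a compact and totally disconnected topological space. -/
/-!
Sending an ordering `P` to its indicator function identifies `χ(K)` with a subspace of the
Cantor space `K → Bool`: the Harrison topology is the induced one because, for `a ≠ 0`, the
complement of `H(a)` is `H(-a)`. The ordering axioms only ever constrain two or three
coordinates at a time, so the image is closed, and a closed subspace of a Cantor space is
compact and totally disconnected.
-/

/-- An ordering of a (comm) ring `K`: `P + P ⊆ P`, `P·P ⊆ P`, `-1 ∉ P`, `P ∪ (-P) = K`. -/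
def IsOrdering {K : Type*} [CommRing K] (P : Set K) : Prop :=
  (∀ x ∈ P, ∀ y ∈ P, x + y ∈ P) ∧ (∀ x ∈ P, ∀ y ∈ P, x * y ∈ P) ∧
    (-1 : K) ∉ P ∧ ∀ x : K, x ∈ P ∨ -x ∈ P

/-- `sumsOfPowers K n` is the set of finite sums of `n`-th powers of elements of `K`. -/
def sumsOfPowers (K : Type*) [CommRing K] (n : ℕ) : Set K :=
  {a | ∃ (m : ℕ) (f : Fin m → K), a = ∑ i, f i ^ n}

/-- The Harrison topology on the space `χ(K)` of orderings of a field `K`, generated by the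
sets `H(a) = {P ∈ χ(K) | a ∈ P}` for `a ≠ 0`. -/
def harrisonTopology (K : Type*) [Field K] : TopologicalSpace {P : Set K // IsOrdering P} :=
  TopologicalSpace.generateFrom {S | ∃ a : K, a ≠ 0 ∧ S = {P | a ∈ P.1}}

theorem Set.boolIndicator_injective {α : Type*} :
    Function.Injective (Set.boolIndicator : Set α → α → Bool) :=
  fun s t h => Set.ext fun a => by simp only [Set.mem_iff_boolIndicator, congrFun h a]

theorem Set.boolIndicator_ofPred_eq_true {α : Type*} (f : α → Bool) :
    {a | f a = true}.boolIndicator = f := by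
  funext a
  cases h : f a
  · exact (Set.notMem_iff_boolIndicator _ a).1 (by simp [h])
  · exact (Set.mem_iff_boolIndicator _ a).1 h

namespace IsOrdering

variable {K : Type*}

theorem zero_mem [CommRing K] {P : Set K} (h : IsOrdering P) : (0 : K) ∈ P := by
  rcases h.2.2.2 0 with h0 | h0 <;> simpa using h0

theorem mul_self_mem [CommRing K] {P : Set K} (h : IsOrdering P) (x : K) : x * x ∈ P := by
  rcases h.2.2.2 x with hx | hx
  · exact h.2.1 x hx x hx
  · simpa using h.2.1 _ hx _ hx

theorem neg_mem_iff_not_mem [Field K] {P : Set K} (h : IsOrdering P) {a : K} (ha : a ≠ 0) :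
    -a ∈ P ↔ a ∉ P := by
  refine ⟨fun hna haP => h.2.2.1 ?_, fun haP => (h.2.2.2 a).resolve_left haP⟩
  have key : a * -a * (a⁻¹ * a⁻¹) = -1 := by field_simp
  exact key ▸ h.2.1 _ (h.2.1 _ haP _ hna) _ (h.mul_self_mem a⁻¹)

end IsOrdering

section CantorSpace

variable {K : Type*} [CommRing K]

theorem range_boolIndicator_isOrdering :
    Set.range (fun P : {P : Set K // IsOrdering P} => P.1.boolIndicator) =
      {f | IsOrdering {a | f a = true}} := by
  ext f
  constructor
  · rintro ⟨P, rfl⟩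
    simpa only [Set.mem_ofPred_eq, ← Set.mem_iff_boolIndicator, Set.ofPred_mem_eq] using P.2
  · exact fun hf => ⟨⟨_, hf⟩, Set.boolIndicator_ofPred_eq_true f⟩

theorem isClosed_setOf_isOrdering : IsClosed {f : K → Bool | IsOrdering {a | f a = true}} := by
  have closed3 (x y z : K) (p : Bool → Bool → Bool → Prop) :
      IsClosed {f : K → Bool | p (f x) (f y) (f z)} :=
    (isClosed_discrete {b : Bool × Bool × Bool | p b.1 b.2.1 b.2.2}).preimage
      (by fun_prop : Continuous fun f : K → Bool => (f x, f y, f z))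
  simp only [IsOrdering, Set.mem_ofPred_eq, Set.ofPred_and, Set.ofPred_forall, imp_forall_iff]
  exact .inter
    (isClosed_iInter fun x => isClosed_iInter fun y =>
      closed3 x y (x + y) fun a b c => a = true → b = true → c = true)
    (.inter
      (isClosed_iInter fun x => isClosed_iInter fun y =>
        closed3 x y (x * y) fun a b c => a = true → b = true → c = true)
      (.inter (closed3 (-1) (-1) (-1) fun a _ _ => a ≠ true)
        (isClosed_iInter fun x => closed3 x (-x) x fun a b _ => a = true ∨ b = true)))

end CantorSpace

section Harrison

variable {K : Type*} [Field K]

local instance : TopologicalSpace {P : Set K // IsOrdering P} := harrisonTopology K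

theorem isClopen_setOf_mem (a : K) : IsClopen {P : {P : Set K // IsOrdering P} | a ∈ P.1} := by
  rcases eq_or_ne a 0 with rfl | ha
  · simpa only [fun P : {P : Set K // IsOrdering P} => P.2.zero_mem, Set.ofPred_true]
      using isClopen_univ
  have isOpen_H (b : K) (hb : b ≠ 0) : IsOpen {P : {P : Set K // IsOrdering P} | b ∈ P.1} :=
    TopologicalSpace.isOpen_generateFrom_of_mem ⟨b, hb, rfl⟩
  refine ⟨?_, isOpen_H a ha⟩
  rw [← isOpen_compl_iff]
  simpa only [Set.compl_ofPred, fun P : {P : Set K // IsOrdering P} =>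
    P.2.neg_mem_iff_not_mem ha] using isOpen_H (-a) (neg_ne_zero.2 ha)

theorem isInducing_boolIndicator :
    Topology.IsInducing fun P : {P : Set K // IsOrdering P} => P.1.boolIndicator := by
  have hcont : Continuous fun P : {P : Set K // IsOrdering P} => P.1.boolIndicator :=
    continuous_pi fun a => (continuous_boolIndicator_iff_isClopen _).2 (isClopen_setOf_mem a)
  refine ⟨le_antisymm hcont.le_induced (le_generateFrom ?_)⟩
  rintro _ ⟨a, -, rfl⟩
  have : IsOpen {f : K → Bool | f a = true} :=
    (isOpen_discrete {true}).preimage (by fun_prop : Continuous fun f : K → Bool => f a)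
  exact isOpen_induced_iff.2 ⟨_, this, Set.ext fun P => (Set.mem_iff_boolIndicator P.1 a).symm⟩

theorem isClosedEmbedding_boolIndicator :
    Topology.IsClosedEmbedding fun P : {P : Set K // IsOrdering P} => P.1.boolIndicator :=
  ⟨⟨isInducing_boolIndicator, Set.boolIndicator_injective.comp Subtype.val_injective⟩,
    range_boolIndicator_isOrdering (K := K) ▸ isClosed_setOf_isOrdering⟩

end Harrison

/-- `χ(K)` with the Harrison topology is compact and totally disconnected. -/
theorem stmt2 (K : Type*) [Field K] :
    @CompactSpace {P : Set K // IsOrdering P} (harrisonTopology K) ∧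
      @TotallyDisconnectedSpace {P : Set K // IsOrdering P} (harrisonTopology K) := by
  let := harrisonTopology K
  have h := isClosedEmbedding_boolIndicator (K := K)
  exact ⟨h.compactSpace, h.isEmbedding.isTotallyDisconnected_range.1
    (isTotallyDisconnected_of_totallyDisconnectedSpace _)⟩
end

section
/- Let K be a field and P an ordering of K. Let k = A(P)/I(P) be the residue field and π : A(P) → k the quotient map. Then the image P̄ = π(P ∩ A(P)) is an ordering of the field k, and this ordering is archimedean: for every x ∈ k there exists n ∈ ℕ with (n : k) − x ∈ P̄. -/
/-- `A(P)`: the convex hull of `ℚ` in `K` with respect to the ordering `P`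
(writing `x ≤_P y` for `y - x ∈ P`): `{a | ∃ r ∈ ℚ, -r ≤_P a ≤_P r}`. -/
def ratHull {K : Type*} [Field K] (P : Set K) : Set K :=
  {a | ∃ r : ℚ, a + (r : K) ∈ P ∧ (r : K) - a ∈ P}

/-- `I(P) = {a | ∀ r ∈ ℚ, r > 0 → -r ≤_P a ≤_P r}`. -/
def ratInfinitesimals {K : Type*} [Field K] (P : Set K) : Set K :=
  {a | ∀ r : ℚ, 0 < r → a + (r : K) ∈ P ∧ (r : K) - a ∈ P}

set_option synthInstance.maxHeartbeats 1000000 in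
/-- Let `A` be the subring `A(P)` of `K` and `I` the ideal `I(P)` of `A`. Then the image
`P̄ = π(P ∩ A(P))` of `P` in the residue field `k = A(P)/I(P)` is an ordering of `k`, and this
ordering is archimedean: for every `x ∈ k` there is `n ∈ ℕ` with `(n : k) - x ∈ P̄`. -/
theorem stmt5 {K : Type*} [Field K] (P : Set K) (hP : IsOrdering P)
    (A : Subring K) (hA : (A : Set K) = ratHull P)
    (I : Ideal A) (hI : ∀ a : A, a ∈ I ↔ (a : K) ∈ ratInfinitesimals P) :
    IsOrdering ((Ideal.Quotient.mk I) '' {a : A | (a : K) ∈ P}) ∧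
      ∀ x : A ⧸ I, ∃ n : ℕ,
        (n : A ⧸ I) - x ∈ (Ideal.Quotient.mk I) '' {a : A | (a : K) ∈ P} := by
  obtain ⟨hadd, hmul, hneg1, htot⟩ := hP
  have hzero : (0 : K) ∈ P := by rcases htot 0 with h | h <;> simpa using h
  have hsq : ∀ x : K, x * x ∈ P := by
    intro x
    rcases htot x with h | h
    · exact hmul x h x h
    · have := hmul _ h _ h
      simpa using this
  have hone : (1 : K) ∈ P := by simpa using hsq 1
  have hnat : ∀ n : ℕ, (n : K) ∈ P := by
    intro n; induction n with
    | zero => simpa using hzero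
    | succ n ih => push_cast; exact hadd _ ih _ hone
  have hne : ∀ n : ℕ, 0 < n → ((n : K) ≠ 0) := by
    intro n hn h
    have h1 : ((n - 1 : ℕ) : K) = -1 := by
      rw [Nat.cast_sub hn, h]; simp
    exact hneg1 (h1 ▸ hnat (n - 1))
  haveI : CharZero K := charZero_of_inj_zero fun n h => by
    by_contra hn; exact hne n (Nat.pos_of_ne_zero hn) h
  have hratnn : ∀ q : ℚ, 0 ≤ q → (q : K) ∈ P := by
    intro q hq
    have hdK : (q.den : K) ≠ 0 := hne q.den q.pos
    have key : (q : K) = ((q.num.toNat * q.den : ℕ) : K) * ((q.den : K)⁻¹ * (q.den : K)⁻¹) := by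
      rw [Rat.cast_def]
      have hnum : ((q.num.toNat : ℕ) : K) = ((q.num : ℤ) : K) := by
        rw [← Int.cast_natCast, Int.toNat_of_nonneg (Rat.num_nonneg.2 hq)]
      rw [Nat.cast_mul, hnum]
      field_simp
    rw [key]
    exact hmul _ (hnat _) _ (hsq _)
  refine ⟨⟨?_, ?_, ?_, ?_⟩, ?_⟩
  · rintro x ⟨a, ha, rfl⟩ y ⟨b, hb, rfl⟩
    exact ⟨a + b, by simpa using hadd _ ha _ hb, by simp⟩
  · rintro x ⟨a, ha, rfl⟩ y ⟨b, hb, rfl⟩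
    exact ⟨a * b, by simpa using hmul _ ha _ hb, by simp⟩
  · rintro ⟨a, ha, hπ⟩
    have hmem : a + 1 ∈ I := by
      rw [← Ideal.Quotient.eq_zero_iff_mem, map_add, hπ]
      simp
    have hinf := ((hI _).1 hmem) (1/2) (by norm_num)
    have h2 : (((1:ℚ)/2 : ℚ) : K) - ((a + 1 : A) : K) ∈ P := hinf.2
    have hs := hadd _ ha _ h2
    have ht := hmul _ hs _ (hnat 2)
    have hEq : ((a : K) + ((((1:ℚ)/2 : ℚ) : K) - ((a + 1 : A) : K))) * (2 : ℕ) = -1 := by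
      push_cast
      ring
    rw [hEq] at ht
    exact hneg1 ht
  · intro x
    obtain ⟨a, rfl⟩ := Ideal.Quotient.mk_surjective x
    rcases htot (a : K) with h | h
    · exact Or.inl ⟨a, h, rfl⟩
    · exact Or.inr ⟨-a, by simpa using h, by simp⟩
  · intro x
    obtain ⟨a, rfl⟩ := Ideal.Quotient.mk_surjective x
    have haA : (a : K) ∈ ratHull P := by rw [← hA]; exact a.2
    obtain ⟨r, h1, h2⟩ := haA
    refine ⟨⌈r⌉₊, (⌈r⌉₊ : A) - a, ?_, by simp⟩
    have hq : (((⌈r⌉₊ : ℚ) - r : ℚ) : K) ∈ P := hratnn _ (sub_nonneg.2 (Nat.le_ceil r))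
    have := hadd _ hq _ h2
    have hEq : (((⌈r⌉₊ : ℚ) - r : ℚ) : K) + ((r : K) - (a : K)) = (((⌈r⌉₊ : A) - a : A) : K) := by
      push_cast
      ring
    rwa [hEq] at this
end

section
/- Let K be a field, P an ordering of K, and a ∈ A(P). Then the sets {r ∈ ℚ | a ≤_P r} and {r ∈ ℚ | r ≤_P a} are both nonempty, and in ℝ one has inf{(r : ℝ) | r ∈ ℚ, a ≤_P r} = sup{(r : ℝ) | r ∈ ℚ, r ≤_P a}. -/
lemma ord_sq {K : Type*} [CommRing K] {P : Set K} (hP : IsOrdering P) (x : K) :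
    x * x ∈ P := by
  rcases hP.2.2.2 x with h | h
  · exact hP.2.1 x h x h
  · have := hP.2.1 _ h _ h
    simpa using this

lemma ord_nat {K : Type*} [CommRing K] {P : Set K} (hP : IsOrdering P) (n : ℕ) :
    (n : K) ∈ P := by
  induction n with
  | zero => simpa using ord_sq hP 0
  | succ n ih =>
    have h1 : (1 : K) ∈ P := by simpa using ord_sq hP 1
    simpa [add_comm] using hP.1 _ ih _ h1

lemma ord_nat_ne_zero {K : Type*} [CommRing K] {P : Set K} (hP : IsOrdering P) {n : ℕ}
    (hn : 0 < n) : (n : K) ≠ 0 := by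
  intro h0
  apply hP.2.2.1
  have h1 : ((n - 1 : ℕ) : K) = -1 := by
    rw [Nat.cast_sub hn, h0]
    ring
  exact h1 ▸ ord_nat hP (n - 1)

lemma ord_charZero {K : Type*} [CommRing K] [Nontrivial K] [NoZeroDivisors K] {P : Set K}
    (hP : IsOrdering P) : CharZero K := by
  constructor
  intro m n h
  by_contra hne
  rcases lt_or_gt_of_ne hne with hlt | hlt
  · exact ord_nat_ne_zero hP (n := n - m) (by omega) (by rw [Nat.cast_sub hlt.le, h, sub_self])
  · exact ord_nat_ne_zero hP (n := m - n) (by omega) (by rw [Nat.cast_sub hlt.le, h, sub_self])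

lemma ord_rat_pos {K : Type*} [Field K] {P : Set K} (hP : IsOrdering P) {q : ℚ}
    (hq : 0 < q) : (q : K) ∈ P := by
  haveI := ord_charZero hP
  have hnum : ((q.num.toNat : ℕ) : K) ∈ P := ord_nat hP _
  have hden : ((q.den : ℕ) : K) ∈ P := ord_nat hP _
  have hsq : ((q.den : K)⁻¹) * ((q.den : K)⁻¹) ∈ P := ord_sq hP _
  have hmem := hP.2.1 _ (hP.2.1 _ hnum _ hden) _ hsq
  have hd0 : (q.den : K) ≠ 0 := Nat.cast_ne_zero.mpr q.den_nz
  have hq' : (q : K) = (q.num.toNat : K) * (q.den : K) * ((q.den : K)⁻¹ * (q.den : K)⁻¹) := by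
    have hnn : ((q.num.toNat : ℤ) : K) = (q.num : K) := by
      congr 1
      have := Rat.num_pos.mpr hq
      omega
    push_cast at hnn ⊢
    rw [Rat.cast_def, hnn]
    field_simp
  rw [hq']
  exact hmem

lemma ord_rat_neg_not {K : Type*} [Field K] {P : Set K} (hP : IsOrdering P) {q : ℚ}
    (hq : q < 0) : (q : K) ∉ P := by
  haveI := ord_charZero hP
  intro hmem
  apply hP.2.2.1
  have hinv : (((-q)⁻¹ : ℚ) : K) ∈ P := ord_rat_pos hP (inv_pos.mpr (neg_pos.mpr hq))
  have := hP.2.1 _ hmem _ hinv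
  have heq : (q : K) * (((-q)⁻¹ : ℚ) : K) = -1 := by
    rw [← Rat.cast_mul, show q * (-q)⁻¹ = -1 by
      rw [inv_neg, mul_neg, mul_inv_cancel₀ hq.ne]]
    simp
  rwa [heq] at this

theorem stmt6' {K : Type*} [Field K] (P : Set K) (hP : IsOrdering P)
    (a : K) (ha : ∃ r : ℚ, a + (r : K) ∈ P ∧ (r : K) - a ∈ P) :
    {r : ℚ | (r : K) - a ∈ P}.Nonempty ∧ {r : ℚ | a - (r : K) ∈ P}.Nonempty ∧
      sInf {x : ℝ | ∃ r : ℚ, (r : K) - a ∈ P ∧ x = (r : ℝ)} =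
        sSup {x : ℝ | ∃ r : ℚ, a - (r : K) ∈ P ∧ x = (r : ℝ)} := by
  haveI := ord_charZero hP
  obtain ⟨r, hr1, hr2⟩ := ha
  have hdn : a - ((-r : ℚ) : K) ∈ P := by push_cast; rw [sub_neg_eq_add]; exact hr1
  refine ⟨⟨r, hr2⟩, ⟨-r, hdn⟩, ?_⟩
  set Su : Set ℝ := {x | ∃ r : ℚ, (r : K) - a ∈ P ∧ x = (r : ℝ)} with hSu
  set Sd : Set ℝ := {x | ∃ r : ℚ, a - (r : K) ∈ P ∧ x = (r : ℝ)} with hSd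
  have hSu_ne : Su.Nonempty := ⟨(r : ℝ), r, hr2, rfl⟩
  have hSd_ne : Sd.Nonempty := ⟨((-r : ℚ) : ℝ), -r, hdn, rfl⟩
  have key : ∀ s : ℚ, a - (s : K) ∈ P → ∀ t : ℚ, (t : K) - a ∈ P → (s : ℝ) ≤ (t : ℝ) := by
    intro s hs t ht
    by_contra hlt
    push_neg at hlt
    have hts : t < s := by exact_mod_cast hlt
    have hmem : ((t - s : ℚ) : K) ∈ P := by
      have h2 := hP.1 _ ht _ hs
      push_cast
      convert h2 using 1
      ring
    exact ord_rat_neg_not hP (sub_neg.mpr hts) hmem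
  have hbddU : BddBelow Su := ⟨((-r : ℚ) : ℝ), fun x hx => by
    obtain ⟨t, ht, rfl⟩ := hx; exact key _ hdn _ ht⟩
  have hbddD : BddAbove Sd := ⟨((r : ℚ) : ℝ), fun x hx => by
    obtain ⟨s, hs, rfl⟩ := hx; exact key _ hs _ hr2⟩
  apply le_antisymm
  · by_contra hlt
    push_neg at hlt
    obtain ⟨q, hq1, hq2⟩ := exists_rat_btwn hlt
    rcases hP.2.2.2 ((q : K) - a) with h | h
    · have : sInf Su ≤ (q : ℝ) := csInf_le hbddU ⟨q, h, rfl⟩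
      linarith
    · have h' : a - (q : K) ∈ P := by rwa [neg_sub] at h
      have : (q : ℝ) ≤ sSup Sd := le_csSup hbddD ⟨q, h', rfl⟩
      linarith
  · apply csSup_le hSd_ne
    intro x hx
    obtain ⟨s, hs, rfl⟩ := hx
    apply le_csInf hSu_ne
    intro y hy
    obtain ⟨t, ht, rfl⟩ := hy
    exact key _ hs _ ht

/-- For `a ∈ A(P)`, the sets `{r ∈ ℚ | a ≤_P r}` and `{r ∈ ℚ | r ≤_P a}` are nonempty, and in
`ℝ` we have `inf {r ∈ ℚ | a ≤_P r} = sup {r ∈ ℚ | r ≤_P a}`. -/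
theorem stmt6 {K : Type*} [Field K] (P : Set K) (hP : IsOrdering P)
    (a : K) (ha : a ∈ ratHull P) :
    {r : ℚ | (r : K) - a ∈ P}.Nonempty ∧ {r : ℚ | a - (r : K) ∈ P}.Nonempty ∧
      sInf {x : ℝ | ∃ r : ℚ, (r : K) - a ∈ P ∧ x = (r : ℝ)} =
        sSup {x : ℝ | ∃ r : ℚ, a - (r : K) ∈ P ∧ x = (r : ℝ)} := by
  exact stmt6' P hP a ha
end

section
/- Let K be a field and P an ordering of K. The map A(P) → ℝ defined by a ↦ sup{(r : ℝ) | r ∈ ℚ, r ≤_P a} is a ring homomorphism from the ring A(P) to ℝ. -/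
namespace Stmt7


variable {K : Type*} [Field K] {P : Set K}

lemma padd (hP : IsOrdering P) {x y : K} (hx : x ∈ P) (hy : y ∈ P) : x + y ∈ P := hP.1 x hx y hy

lemma pmul (hP : IsOrdering P) {x y : K} (hx : x ∈ P) (hy : y ∈ P) : x * y ∈ P := hP.2.1 x hx y hy

lemma pone (hP : IsOrdering P) : (1 : K) ∈ P := (hP.2.2.2 1).resolve_right hP.2.2.1

lemma pzero (hP : IsOrdering P) : (0 : K) ∈ P := by
  rcases hP.2.2.2 0 with h | h
  · exact h
  · simpa using h

lemma psq (hP : IsOrdering P) (x : K) : x * x ∈ P := by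
  rcases hP.2.2.2 x with h | h
  · exact pmul hP h h
  · simpa using pmul hP h h

lemma pinv (hP : IsOrdering P) {x : K} (hx : x ∈ P) : x⁻¹ ∈ P := by
  rcases eq_or_ne x 0 with rfl | h
  · simpa using hx
  · have hm := pmul hP hx (psq hP x⁻¹)
    rwa [show x * (x⁻¹ * x⁻¹) = x⁻¹ by field_simp] at hm

lemma peq0 (hP : IsOrdering P) {x : K} (h1 : x ∈ P) (h2 : -x ∈ P) : x = 0 := by
  by_contra hx
  have hm := pmul hP h2 (pinv hP h1)
  rw [show -x * x⁻¹ = -1 by field_simp] at hm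
  exact hP.2.2.1 hm

lemma pnat (hP : IsOrdering P) (n : ℕ) : ((n : ℕ) : K) ∈ P := by
  induction n with
  | zero => simpa using pzero hP
  | succ k ih => push_cast; exact padd hP ih (pone hP)

lemma pcharZero (hP : IsOrdering P) : CharZero K := by
  have key : ∀ m n : ℕ, m < n → ((m : K) = (n : K)) → False := by
    intro m n hlt h
    have hd : ((n - m : ℕ) : K) = 0 := by rw [Nat.cast_sub hlt.le, h, sub_self]
    obtain ⟨k, hk⟩ : ∃ k, n - m = k + 1 := ⟨n - m - 1, by omega⟩
    rw [hk] at hd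
    push_cast at hd
    have hp := pnat hP k
    rw [show ((k : ℕ) : K) = -1 by linear_combination hd] at hp
    exact hP.2.2.1 hp
  refine ⟨fun m n h => ?_⟩
  rcases lt_trichotomy m n with hlt | he | hlt
  · exact absurd (key m n hlt h) not_false
  · exact he
  · exact absurd (key n m hlt h.symm) not_false

lemma pratnn (hP : IsOrdering P) {q : ℚ} (hq : 0 ≤ q) : ((q : ℚ) : K) ∈ P := by
  have h1 : ((q.num.toNat : ℕ) : K) = (q.num : K) := by
    rw [← Int.cast_natCast, Int.toNat_of_nonneg (Rat.num_nonneg.mpr hq)]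
  have h2 : ((q : ℚ) : K) = ((q.num.toNat : ℕ) : K) * (((q.den : ℕ) : K))⁻¹ := by
    rw [Rat.cast_def, div_eq_mul_inv, h1]
  rw [h2]
  exact pmul hP (pnat hP _) (pinv hP (pnat hP _))

lemma prat_nonneg (hP : IsOrdering P) {q : ℚ} (h : ((q : ℚ) : K) ∈ P) : 0 ≤ q := by
  haveI := pcharZero hP
  by_contra hq
  push_neg at hq
  have h2 : ((-q : ℚ) : K) ∈ P := pratnn hP (by linarith)
  have h3 : ((q : ℚ) : K) = 0 := peq0 hP h (by push_cast at h2 ⊢; exact h2)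
  have : q = 0 := by exact_mod_cast h3
  linarith




def cut (P : Set K) (a : K) : Set ℝ := {x : ℝ | ∃ r : ℚ, a - (r : K) ∈ P ∧ x = (r : ℝ)}

noncomputable def phi (P : Set K) (a : K) : ℝ := sSup (cut P a)

lemma cut_nonempty (hP : IsOrdering P) {a : K} (ha : a ∈ ratHull P) : (cut P a).Nonempty := by
  haveI := pcharZero hP
  obtain ⟨r, h1, _⟩ := ha
  exact ⟨((-r : ℚ) : ℝ), -r, by push_cast; simpa [sub_neg_eq_add] using h1, rfl⟩

lemma cut_ub (hP : IsOrdering P) {a : K} {r : ℚ} (hr : (r : K) - a ∈ P) :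
    ∀ x ∈ cut P a, x ≤ (r : ℝ) := by
  haveI := pcharZero hP
  rintro x ⟨s, hs, rfl⟩
  have h : ((r - s : ℚ) : K) ∈ P := by
    have h0 := padd hP hr hs
    have he : ((r - s : ℚ) : K) = ((r:K) - a) + (a - (s:K)) := by push_cast; ring
    rw [he]; exact h0
  have h2 := prat_nonneg hP h
  exact_mod_cast (by linarith : s ≤ r)

lemma cut_bdd (hP : IsOrdering P) {a : K} (ha : a ∈ ratHull P) : BddAbove (cut P a) := by
  obtain ⟨r, _, h2⟩ := ha
  exact ⟨(r : ℝ), fun x hx => cut_ub hP h2 x hx⟩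

lemma le_phi (hP : IsOrdering P) {a : K} {r : ℚ} (h : a - (r : K) ∈ P) (ha : a ∈ ratHull P) :
    (r : ℝ) ≤ phi P a := le_csSup (cut_bdd hP ha) ⟨r, h, rfl⟩

lemma lt_phi_mem (hP : IsOrdering P) {a : K} {r : ℚ} (ha : a ∈ ratHull P)
    (h : (r : ℝ) < phi P a) : a - (r : K) ∈ P := by
  haveI := pcharZero hP
  obtain ⟨x, hx, hrx⟩ := exists_lt_of_lt_csSup (cut_nonempty hP ha) h
  obtain ⟨s, hs, rfl⟩ := hx
  have hrs : r ≤ s := by exact_mod_cast hrx.le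
  have he : a - (r : K) = (a - (s : K)) + ((s - r : ℚ) : K) := by
    push_cast; ring
  rw [he]
  exact padd hP hs (pratnn hP (by linarith))

lemma phi_lt_mem (hP : IsOrdering P) {a : K} {r : ℚ} (ha : a ∈ ratHull P)
    (h : phi P a < (r : ℝ)) : (r : K) - a ∈ P := by
  rcases hP.2.2.2 ((r : K) - a) with hm | hm
  · exact hm
  · have h2 : a - (r : K) ∈ P := by simpa [neg_sub] using hm
    exact absurd (le_phi hP h2 ha) (not_le.mpr h)

lemma hull_rat (hP : IsOrdering P) (q : ℚ) : ((q : ℚ) : K) ∈ ratHull P := by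
  haveI := pcharZero hP
  refine ⟨|q|, ?_, ?_⟩
  · rw [show ((q:ℚ):K) + ((|q|:ℚ):K) = ((q + |q| : ℚ) : K) from by push_cast; ring]
    exact pratnn hP (by linarith [neg_abs_le q])
  · rw [show ((|q|:ℚ):K) - ((q:ℚ):K) = ((|q| - q : ℚ) : K) from by push_cast; ring]
    exact pratnn hP (by linarith [le_abs_self q])

lemma phi_rat (hP : IsOrdering P) (q : ℚ) : phi P ((q : ℚ) : K) = (q : ℝ) := by
  have hq0 : ((q:ℚ):K) - ((q:ℚ):K) ∈ P := by simpa using pzero hP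
  apply le_antisymm
  · exact csSup_le ⟨(q:ℝ), q, hq0, rfl⟩ (cut_ub hP hq0)
  · exact le_phi hP hq0 (hull_rat hP q)

lemma phi_nonneg (hP : IsOrdering P) {a : K} (haP : a ∈ P) (ha : a ∈ ratHull P) :
    0 ≤ phi P a := by
  have h : a - ((0 : ℚ) : K) ∈ P := by simpa using haP
  simpa using le_phi hP h ha

lemma phi_add (hP : IsOrdering P) {a b : K} (ha : a ∈ ratHull P) (hb : b ∈ ratHull P)
    (hab : a + b ∈ ratHull P) : phi P (a + b) = phi P a + phi P b := by
  haveI := pcharZero hP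
  apply le_antisymm
  · by_contra hc
    push_neg at hc
    set δ : ℝ := (phi P (a+b) - phi P a - phi P b) / 2 with hδ
    have hδ0 : 0 < δ := by simp only [hδ]; linarith
    obtain ⟨r, hr1, hr2⟩ := exists_rat_btwn (show phi P a < phi P a + δ by linarith)
    obtain ⟨s, hs1, hs2⟩ := exists_rat_btwn (show phi P b < phi P b + δ by linarith)
    have hra : (r : K) - a ∈ P := phi_lt_mem hP ha hr1
    have hsb : (s : K) - b ∈ P := phi_lt_mem hP hb hs1
    have hrs : ((r : ℝ) + s) < phi P (a + b) := by linarith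
    obtain ⟨t, ht1, ht2⟩ := exists_rat_btwn hrs
    have htm : (a + b) - (t : K) ∈ P := lt_phi_mem hP hab ht2
    have hsum : ((r + s - t : ℚ) : K) ∈ P := by
      have h0 := padd hP (padd hP hra hsb) htm
      have he : ((r + s - t : ℚ) : K) = ((r:K) - a) + ((s:K) - b) + ((a+b) - (t:K)) := by
        push_cast; ring
      rw [he]; exact h0
    have := prat_nonneg hP hsum
    have h9 : (r : ℝ) + s < (t : ℝ) := by exact_mod_cast ht1
    have h10 : (t : ℝ) ≤ (r : ℝ) + s := by exact_mod_cast (by linarith : (t:ℚ) ≤ r + s)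
    linarith
  · by_contra hc
    push_neg at hc
    set δ : ℝ := (phi P a + phi P b - phi P (a+b)) / 2 with hδ
    have hδ0 : 0 < δ := by simp only [hδ]; linarith
    obtain ⟨r, hr1, hr2⟩ := exists_rat_btwn (show phi P a - δ < phi P a by linarith)
    obtain ⟨s, hs1, hs2⟩ := exists_rat_btwn (show phi P b - δ < phi P b by linarith)
    have hra : a - (r : K) ∈ P := lt_phi_mem hP ha hr2
    have hsb : b - (s : K) ∈ P := lt_phi_mem hP hb hs2
    have hmem : (a + b) - ((r + s : ℚ) : K) ∈ P := by
      have h0 := padd hP hra hsb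
      have he : (a + b) - ((r + s : ℚ) : K) = (a - (r:K)) + (b - (s:K)) := by
        push_cast; ring
      rw [he]; exact h0
    have := le_phi hP hmem hab
    have h9 : ((r + s : ℚ) : ℝ) = (r:ℝ) + s := by push_cast; ring
    rw [h9] at this
    linarith



lemma phi_mul_nn (hP : IsOrdering P) {a b : K} (haP : a ∈ P) (hbP : b ∈ P)
    (ha : a ∈ ratHull P) (hb : b ∈ ratHull P) (hab : a * b ∈ ratHull P) :
    phi P (a * b) = phi P a * phi P b := by
  haveI := pcharZero hP
  have ha0 : 0 ≤ phi P a := phi_nonneg hP haP ha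
  have hb0 : 0 ≤ phi P b := phi_nonneg hP hbP hb
  have hab0 : 0 ≤ phi P (a * b) := phi_nonneg hP (pmul hP haP hbP) hab
  apply le_antisymm
  · -- phi (a*b) ≤ phi a * phi b
    apply csSup_le (cut_nonempty hP hab)
    rintro x ⟨w, hw, rfl⟩
    by_contra hc
    push_neg at hc
    set δ : ℝ := min 1 (((w : ℝ) - phi P a * phi P b) / (phi P a + phi P b + 2)) with hδ
    have hδ1 : δ ≤ 1 := min_le_left _ _
    have hδ2 : δ ≤ ((w : ℝ) - phi P a * phi P b) / (phi P a + phi P b + 2) := min_le_right _ _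
    have hδ0 : 0 < δ := by
      apply lt_min one_pos
      apply div_pos (by linarith) (by linarith)
    obtain ⟨s, hs1, hs2⟩ := exists_rat_btwn (show phi P a < phi P a + δ by linarith)
    obtain ⟨v, hv1, hv2⟩ := exists_rat_btwn (show phi P b < phi P b + δ by linarith)
    have hsa : (s : K) - a ∈ P := phi_lt_mem hP ha hs1
    have hvb : (v : K) - b ∈ P := phi_lt_mem hP hb hv1
    have hs0 : (0:ℝ) ≤ (s:ℝ) := by linarith
    have hs0' : (0:ℚ) ≤ s := by exact_mod_cast hs0
    have hsv : ((s * v - w : ℚ) : K) ∈ P := by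
      have h1 : (s:K) * ((v:K) - b) ∈ P := pmul hP (pratnn hP hs0') hvb
      have h2 : ((s:K) - a) * b ∈ P := pmul hP hsa hbP
      have h0 := padd hP (padd hP h1 h2) hw
      have he : ((s * v - w : ℚ) : K)
          = (s:K) * ((v:K) - b) + ((s:K) - a) * b + (a * b - (w:K)) := by
        push_cast; ring
      rw [he]; exact h0
    have h3 : (0:ℚ) ≤ s * v - w := prat_nonneg hP hsv
    have h4 : (w : ℝ) ≤ (s:ℝ) * (v:ℝ) := by exact_mod_cast (by linarith : (w:ℚ) ≤ s * v)
    -- but s*v < w : contradiction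
    have hsub : (s:ℝ) * (v:ℝ) < (w:ℝ) := by
      have e1 : (s:ℝ) < phi P a + δ := hs2
      have e2 : (v:ℝ) < phi P b + δ := hv2
      have e3 : (0:ℝ) ≤ (v:ℝ) := by linarith
      have key : (phi P a + δ) * (phi P b + δ) ≤ phi P a * phi P b
          + δ * (phi P a + phi P b + 2) := by nlinarith
      have key2 : δ * (phi P a + phi P b + 2) ≤ (w:ℝ) - phi P a * phi P b := by
        rw [← le_div_iff₀ (by linarith)] at *
        linarith [hδ2]
      nlinarith
    linarith
  · -- phi a * phi b ≤ phi (a*b)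
    rcases eq_or_lt_of_le ha0 with h | hapos
    · rw [← h, zero_mul]; exact hab0
    rcases eq_or_lt_of_le hb0 with h | hbpos
    · rw [← h, mul_zero]; exact hab0
    by_contra hc
    push_neg at hc
    set t : ℝ := phi P (a * b) with ht
    have h1 : t / phi P b < phi P a := by rw [div_lt_iff₀ hbpos]; nlinarith
    have h2 : 0 ≤ t / phi P b := div_nonneg hab0 hbpos.le
    obtain ⟨r, hr1, hr2⟩ := exists_rat_btwn h1
    have hr0 : (0:ℝ) < (r:ℝ) := lt_of_le_of_lt h2 hr1
    have hr0' : (0:ℚ) ≤ r := by exact_mod_cast hr0.le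
    have h3 : t / (r:ℝ) < phi P b := by
      rw [div_lt_iff₀ hr0]
      rw [div_lt_iff₀ hbpos] at hr1
      nlinarith
    have h4 : 0 ≤ t / (r:ℝ) := div_nonneg hab0 hr0.le
    obtain ⟨u, hu1, hu2⟩ := exists_rat_btwn h3
    have hu0' : (0:ℚ) ≤ u := by exact_mod_cast le_of_lt (lt_of_le_of_lt h4 hu1)
    have hra : a - (r:K) ∈ P := lt_phi_mem hP ha hr2
    have hub : b - (u:K) ∈ P := lt_phi_mem hP hb hu2
    have hm : a * b - ((r * u : ℚ) : K) ∈ P := by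
      have m1 : (a - (r:K)) * b ∈ P := pmul hP hra hbP
      have m2 : (r:K) * (b - (u:K)) ∈ P := pmul hP (pratnn hP hr0') hub
      have h0 := padd hP m1 m2
      have he : a * b - ((r * u : ℚ) : K) = (a - (r:K)) * b + (r:K) * (b - (u:K)) := by
        push_cast; ring
      rw [he]; exact h0
    have h5 := le_phi hP hm hab
    have h6 : t < ((r * u : ℚ) : ℝ) := by
      push_cast
      rw [div_lt_iff₀ hr0] at hu1
      nlinarith
    rw [← ht] at h5
    linarith

lemma phi_mul (hP : IsOrdering P) {a b : K} (ha : a ∈ ratHull P) (hb : b ∈ ratHull P)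
    (hadd : ∀ x ∈ ratHull P, ∀ y ∈ ratHull P, x + y ∈ ratHull P)
    (hmul : ∀ x ∈ ratHull P, ∀ y ∈ ratHull P, x * y ∈ ratHull P) :
    phi P (a * b) = phi P a * phi P b := by
  haveI := pcharZero hP
  obtain ⟨m₀, hm₀, -⟩ := id ha
  obtain ⟨n₀, hn₀, -⟩ := id hb
  set m : ℚ := |m₀| with hm
  set n : ℚ := |n₀| with hn
  have hm0 : (0:ℚ) ≤ m := abs_nonneg _
  have hn0 : (0:ℚ) ≤ n := abs_nonneg _
  have ham : a + (m : K) ∈ P := by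
    have he : a + (m : K) = (a + (m₀ : K)) + ((m - m₀ : ℚ) : K) := by push_cast; ring
    rw [he]
    exact padd hP hm₀ (pratnn hP (by linarith [le_abs_self m₀]))
  have hbn : b + (n : K) ∈ P := by
    have he : b + (n : K) = (b + (n₀ : K)) + ((n - n₀ : ℚ) : K) := by push_cast; ring
    rw [he]
    exact padd hP hn₀ (pratnn hP (by linarith [le_abs_self n₀]))
  -- hull memberships
  have hmh : ((m : ℚ) : K) ∈ ratHull P := hull_rat hP m
  have hnh : ((n : ℚ) : K) ∈ ratHull P := hull_rat hP n
  have ha' : a + (m : K) ∈ ratHull P := hadd _ ha _ hmh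
  have hb' : b + (n : K) ∈ ratHull P := hadd _ hb _ hnh
  have hab' : (a + (m : K)) * (b + (n : K)) ∈ ratHull P := hmul _ ha' _ hb'
  have hmb' : ((m : ℚ) : K) * (b + (n : K)) ∈ ratHull P := hmul _ hmh _ hb'
  have hna' : ((n : ℚ) : K) * (a + (m : K)) ∈ ratHull P := hmul _ hnh _ ha'
  have habh : a * b ∈ ratHull P := hmul _ ha _ hb
  -- key identity
  have hid : (a + (m:K)) * (b + (n:K)) + ((m*n : ℚ) : K)
      = (a * b + (m:K) * (b + (n:K))) + ((n:K) * (a + (m:K))) := by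
    push_cast; ring
  -- compute phi of both sides
  have lhs : phi P ((a + (m:K)) * (b + (n:K)) + ((m*n : ℚ) : K))
      = phi P ((a + (m:K)) * (b + (n:K))) + (m*n : ℝ) := by
    rw [phi_add hP hab' (hull_rat hP (m*n)) (hadd _ hab' _ (hull_rat hP (m*n))),
      phi_rat hP]
    push_cast; ring
  have rhs : phi P ((a * b + (m:K) * (b + (n:K))) + ((n:K) * (a + (m:K))))
      = phi P (a * b) + phi P ((m:K) * (b + (n:K))) + phi P ((n:K) * (a + (m:K))) := by
    rw [phi_add hP (hadd _ habh _ hmb') hna' (hadd _ (hadd _ habh _ hmb') _ hna'),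
      phi_add hP habh hmb' (hadd _ habh _ hmb')]
  have e1 : phi P ((a + (m:K)) * (b + (n:K))) = phi P (a + (m:K)) * phi P (b + (n:K)) :=
    phi_mul_nn hP ham hbn ha' hb' hab'
  have e2 : phi P ((m:K) * (b + (n:K))) = (m:ℝ) * phi P (b + (n:K)) := by
    rw [phi_mul_nn hP (pratnn hP hm0) hbn hmh hb' hmb', phi_rat hP]
  have e3 : phi P ((n:K) * (a + (m:K))) = (n:ℝ) * phi P (a + (m:K)) := by
    rw [phi_mul_nn hP (pratnn hP hn0) ham hnh ha' hna', phi_rat hP]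
  have e4 : phi P (a + (m:K)) = phi P a + (m:ℝ) := by
    rw [phi_add hP ha hmh ha', phi_rat hP]
  have e5 : phi P (b + (n:K)) = phi P b + (n:ℝ) := by
    rw [phi_add hP hb hnh hb', phi_rat hP]
  have main := congrArg (phi P) hid
  rw [lhs, rhs, e1, e2, e3, e4, e5] at main
  nlinarith [main]
end Stmt7

/-- The map `A(P) → ℝ`, `a ↦ sup {r ∈ ℚ | r ≤_P a}`, is a ring homomorphism. -/
theorem stmt7 {K : Type*} [Field K] (P : Set K) (hP : IsOrdering P)
    (A : Subring K) (hA : (A : Set K) = ratHull P) :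
    ∃ f : A →+* ℝ,
      ∀ a : A, f a = sSup {x : ℝ | ∃ r : ℚ, (a : K) - (r : K) ∈ P ∧ x = (r : ℝ)} := by
  haveI := Stmt7.pcharZero hP
  have hmem : ∀ x : A, (x : K) ∈ ratHull P := fun x => hA ▸ x.2
  have hadd : ∀ x ∈ ratHull P, ∀ y ∈ ratHull P, x + y ∈ ratHull P := by
    intro x hx y hy
    rw [← hA] at hx hy ⊢
    exact add_mem hx hy
  have hmul : ∀ x ∈ ratHull P, ∀ y ∈ ratHull P, x * y ∈ ratHull P := by
    intro x hx y hy
    rw [← hA] at hx hy ⊢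
    exact mul_mem hx hy
  refine ⟨{ toFun := fun a => Stmt7.phi P (a : K),
            map_one' := ?_, map_mul' := ?_, map_zero' := ?_, map_add' := ?_ },
          fun a => rfl⟩
  · have h := Stmt7.phi_rat hP 1
    rw [Rat.cast_one, Rat.cast_one] at h
    simpa using h
  · intro a b
    have h := Stmt7.phi_mul hP (hmem a) (hmem b) hadd hmul
    simpa using h
  · have h := Stmt7.phi_rat hP 0
    rw [Rat.cast_zero, Rat.cast_zero] at h
    simpa using h
  · intro a b
    have h := Stmt7.phi_add hP (hmem a) (hmem b) (hmem (a + b))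
    simpa using h
end

section
/- For any field K, the map Λ : χ(K) → M(K), P ↦ λ_P, from the space of orderings with the Harrison topology to the space of R-places with its topology, is continuous, closed, and surjective. -/
open scoped Classical

/-- The `ℝ`-place `λ_P : K → ℝ ∪ {∞}` associated to an ordering `P`:
`λ_P a = ∞` if `a ∉ A(P)`, and `λ_P a = sup {r ∈ ℚ | r ≤_P a}` if `a ∈ A(P)`. -/
noncomputable def rPlace {K : Type*} [Field K] (P : Set K) : K → OnePoint ℝ := fun a =>
  if a ∈ ratHull P then
    ((sSup {x : ℝ | ∃ r : ℚ, a - (r : K) ∈ P ∧ x = (r : ℝ)} : ℝ) : OnePoint ℝ)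
  else OnePoint.infty

/-- The space `M(K) = {λ_P | P ∈ χ(K)}` of `ℝ`-places of `K`, as a subset of the space of
functions `K → OnePoint ℝ` (which carries the product topology). -/
def RPlaces (K : Type*) [Field K] : Set (K → OnePoint ℝ) :=
  {f | ∃ P : Set K, IsOrdering P ∧ f = rPlace P}

/-- The natural map `Λ : χ(K) → M(K)`, `P ↦ λ_P`. -/
noncomputable def LambdaMap (K : Type*) [Field K] :
    {P : Set K // IsOrdering P} → RPlaces K :=
  fun P => ⟨rPlace P.1, P.1, P.2, rfl⟩

namespace Stmt9Aux

variable {K : Type*} [Field K] {P : Set K}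

/-- The set whose supremum defines `λ_P a`. -/
def Sset (P : Set K) (a : K) : Set ℝ :=
  {x : ℝ | ∃ r : ℚ, a - (r : K) ∈ P ∧ x = (r : ℝ)}

theorem rPlace_def (P : Set K) (a : K) :
    rPlace P a = if a ∈ ratHull P then ((sSup (Sset P a) : ℝ) : OnePoint ℝ)
      else OnePoint.infty := rfl

theorem zero_mem (hP : IsOrdering P) : (0 : K) ∈ P := by
  rcases hP.2.2.2 0 with h | h
  · exact h
  · simpa using h

theorem sq_mem (hP : IsOrdering P) (x : K) : x * x ∈ P := by
  rcases hP.2.2.2 x with h | h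
  · exact hP.2.1 x h x h
  · have := hP.2.1 _ h _ h
    simpa [neg_mul_neg] using this

theorem one_mem (hP : IsOrdering P) : (1 : K) ∈ P := by
  simpa using sq_mem hP 1

theorem natCast_mem (hP : IsOrdering P) (n : ℕ) : (n : K) ∈ P := by
  induction n with
  | zero => simpa using zero_mem hP
  | succ n ih =>
    push_cast
    exact hP.1 _ ih _ (one_mem hP)

theorem charZero (hP : IsOrdering P) : CharZero K := by
  have hne : ∀ n : ℕ, 0 < n → (n : K) ≠ 0 := by
    intro n hn h
    obtain ⟨m, rfl⟩ := Nat.exists_eq_succ_of_ne_zero hn.ne'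
    apply hP.2.2.1
    have hm : (m : K) = -1 := by
      push_cast at h
      linear_combination h
    rw [← hm]
    exact natCast_mem hP m
  refine ⟨fun m n h => ?_⟩
  rcases lt_trichotomy m n with hlt | he | hlt
  · exfalso
    apply hne (n - m) (by omega)
    rw [Nat.cast_sub hlt.le, h, sub_self]
  · exact he
  · exfalso
    apply hne (m - n) (by omega)
    rw [Nat.cast_sub hlt.le, h, sub_self]

theorem ratCast_ne_zero (hP : IsOrdering P) {q : ℚ} (hq : q ≠ 0) : (q : K) ≠ 0 := by
  haveI := charZero hP
  exact Rat.cast_ne_zero.mpr hq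

theorem not_mem_neg (hP : IsOrdering P) {x : K} (hx : x ∈ P) (hx0 : x ≠ 0) : -x ∉ P := by
  intro h
  apply hP.2.2.1
  have e : (-1 : K) = x * (-x) * (x⁻¹ * x⁻¹) := by
    field_simp
  rw [e]
  exact hP.2.1 _ (hP.2.1 _ hx _ h) _ (sq_mem hP _)

theorem ratCast_nonneg_mem (hP : IsOrdering P) {q : ℚ} (hq : 0 ≤ q) : (q : K) ∈ P := by
  haveI := charZero hP
  have hd0 : ((q.den : ℕ) : K) ≠ 0 := Nat.cast_ne_zero.mpr q.den_nz
  have hn : (q.num.toNat : ℤ) = q.num := Int.toNat_of_nonneg (Rat.num_nonneg.mpr hq)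
  have hnn : ((q.num.toNat : ℕ) : K) = ((q.num : ℤ) : K) := by
    rw [← hn]
    norm_cast
  have e : (q : K) = ((q.num.toNat * q.den : ℕ) : K) * ((q.den : K)⁻¹ * (q.den : K)⁻¹) := by
    rw [Rat.cast_def]
    push_cast
    rw [hnn]
    field_simp
  rw [e]
  exact hP.2.1 _ (natCast_mem hP _) _ (sq_mem hP _)

theorem ratCast_le (hP : IsOrdering P) {q r : ℚ} (h : (r : K) - (q : K) ∈ P) : q ≤ r := by
  haveI := charZero hP
  by_contra hlt
  push_neg at hlt
  have h1 : ((q - r : ℚ) : K) ∈ P := ratCast_nonneg_mem hP (by linarith)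
  have h2 : ((q - r : ℚ) : K) ≠ 0 := ratCast_ne_zero hP (sub_ne_zero.mpr (ne_of_gt hlt))
  apply not_mem_neg hP h1 h2
  have e : -(((q - r : ℚ) : K)) = (r : K) - (q : K) := by push_cast; ring
  rw [e]
  exact h

theorem mem_ratHull_of_bounds (hP : IsOrdering P) {a : K} {q₁ q₂ : ℚ}
    (h₁ : a - (q₁ : K) ∈ P) (h₂ : (q₂ : K) - a ∈ P) : a ∈ ratHull P := by
  haveI := charZero hP
  obtain ⟨m, hm1, hm2⟩ : ∃ m : ℚ, -q₁ ≤ m ∧ q₂ ≤ m :=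
    ⟨max (-q₁) q₂, le_max_left _ _, le_max_right _ _⟩
  refine ⟨m, ?_, ?_⟩
  · have e : a + ((m : ℚ) : K) = (a - (q₁ : K)) + ((q₁ + m : ℚ) : K) := by
      push_cast; ring
    rw [e]
    exact hP.1 _ h₁ _ (ratCast_nonneg_mem hP (by linarith))
  · have e : ((m : ℚ) : K) - a = ((q₂ : K) - a) + ((m - q₂ : ℚ) : K) := by
      push_cast; ring
    rw [e]
    exact hP.1 _ h₂ _ (ratCast_nonneg_mem hP (by linarith))

theorem sset_nonempty (hP : IsOrdering P) {a : K} (ha : a ∈ ratHull P) :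
    (Sset P a).Nonempty := by
  haveI := charZero hP
  obtain ⟨r, hr1, _⟩ := ha
  refine ⟨((-r : ℚ) : ℝ), -r, ?_, rfl⟩
  have e : a - ((-r : ℚ) : K) = a + (r : K) := by push_cast; ring
  rw [e]; exact hr1

theorem sset_bddAbove_of (hP : IsOrdering P) {a : K} {q : ℚ} (hq : (q : K) - a ∈ P) :
    (q : ℝ) ∈ upperBounds (Sset P a) := by
  rintro x ⟨q', hq', rfl⟩
  have : (q : K) - (q' : K) ∈ P := by
    have e : (q : K) - (q' : K) = ((q : K) - a) + (a - (q' : K)) := by ring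
    rw [e]; exact hP.1 _ hq _ hq'
  exact_mod_cast ratCast_le hP this

theorem sset_bddAbove (hP : IsOrdering P) {a : K} (ha : a ∈ ratHull P) :
    BddAbove (Sset P a) := by
  obtain ⟨r, _, hr2⟩ := ha
  exact ⟨(r : ℝ), sset_bddAbove_of hP hr2⟩

theorem mem_sset (hP : IsOrdering P) {a : K} {q : ℚ} (hq : a - (q : K) ∈ P) :
    ((q : ℚ) : ℝ) ∈ Sset P a := ⟨q, hq, rfl⟩

/-- Any element `b` gives an open "positivity set" in the Harrison topology. -/
theorem memOpen (K : Type*) [Field K] (b : K) :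
    @IsOpen _ (harrisonTopology K) {P : {P : Set K // IsOrdering P} | b ∈ P.1} := by
  by_cases hb : b = 0
  · subst hb
    have : {P : {P : Set K // IsOrdering P} | (0 : K) ∈ P.1} = Set.univ := by
      ext Q; simpa using zero_mem Q.2
    rw [this]
    exact @isOpen_univ _ (harrisonTopology K)
  · exact TopologicalSpace.isOpen_generateFrom_of_mem ⟨b, hb, rfl⟩

/-- Continuity of each component `P ↦ λ_P(a)`. -/
theorem cont_component (K : Type*) [Field K] (a : K) :
    @Continuous _ _ (harrisonTopology K) _
      (fun P : {P : Set K // IsOrdering P} => rPlace P.1 a) := by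
  letI := harrisonTopology K
  rw [continuous_def]
  intro U hU
  rw [isOpen_iff_forall_mem_open]
  rintro ⟨P, hP⟩ hmem
  simp only [Set.mem_preimage] at hmem
  by_cases ha : a ∈ ratHull P
  · -- finite value case
    set x := sSup (Sset P a) with hx
    have hxU : (x : OnePoint ℝ) ∈ U := by rwa [rPlace_def, if_pos ha] at hmem
    have hUopen : IsOpen (OnePoint.some ⁻¹' U) := hU.preimage OnePoint.continuous_coe
    obtain ⟨ε, hε, hball⟩ := Metric.isOpen_iff.mp hUopen x hxU
    obtain ⟨r₂, hr₂x, hr₂⟩ := exists_rat_btwn (show x < x + ε by linarith)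
    obtain ⟨y, hy, hylt⟩ := exists_lt_of_lt_csSup (sset_nonempty hP ha)
      (show x - ε < x by linarith)
    obtain ⟨q₁, hq₁P, rfl⟩ := hy
    have hq₂P : (r₂ : K) - a ∈ P := by
      rcases hP.2.2.2 ((r₂ : K) - a) with h | h
      · exact h
      · exfalso
        have h' : a - (r₂ : K) ∈ P := by
          have e : a - (r₂ : K) = -((r₂ : K) - a) := by ring
          rw [e]; exact h
        have : ((r₂ : ℚ) : ℝ) ≤ x := le_csSup (sset_bddAbove hP ha) (mem_sset hP h')
        linarith
    refine ⟨{Q : {P : Set K // IsOrdering P} | a - (q₁ : K) ∈ Q.1} ∩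
      {Q | (r₂ : K) - a ∈ Q.1}, ?_, ((memOpen K _).inter (memOpen K _)), hq₁P, hq₂P⟩
    rintro ⟨Q, hQ⟩ ⟨h1, h2⟩
    have haQ : a ∈ ratHull Q := mem_ratHull_of_bounds hQ h1 h2
    simp only [Set.mem_preimage]
    rw [rPlace_def, if_pos haQ]
    apply hball
    have hub : sSup (Sset Q a) ≤ (r₂ : ℝ) :=
      csSup_le ⟨_, mem_sset hQ h1⟩ (sset_bddAbove_of hQ h2)
    have hlb : ((q₁ : ℚ) : ℝ) ≤ sSup (Sset Q a) :=
      le_csSup ⟨(r₂ : ℝ), sset_bddAbove_of hQ h2⟩ (mem_sset hQ h1)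
    rw [Metric.mem_ball, Real.dist_eq, abs_lt]
    constructor <;> linarith
  · -- infinite value case
    have hinf : OnePoint.infty ∈ U := by rwa [rPlace_def, if_neg ha] at hmem
    obtain ⟨hclosed, hcomp⟩ := (OnePoint.isOpen_iff_of_mem hinf).mp hU
    obtain ⟨u, hu⟩ := hcomp.bddAbove
    obtain ⟨l, hl⟩ := hcomp.bddBelow
    obtain ⟨s, hs⟩ := exists_rat_gt u
    obtain ⟨r, hr⟩ := exists_rat_lt l
    have hUr : ∀ z : ℝ, z < (r : ℝ) ∨ (s : ℝ) < z → OnePoint.some z ∈ U := by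
      intro z hz
      by_contra h
      have hzC : z ∈ (OnePoint.some ⁻¹' U)ᶜ := h
      rcases hz with hz | hz
      · have := hl hzC; linarith
      · have := hu hzC; linarith
    have hcases : (∀ q : ℚ, a - (q : K) ∈ P) ∨ (∀ q : ℚ, (q : K) - a ∈ P) := by
      by_contra h
      push_neg at h
      obtain ⟨⟨q₂, h₂⟩, ⟨q₁, h₁⟩⟩ := h
      have h₂' : (q₂ : K) - a ∈ P := by
        rcases hP.2.2.2 (a - (q₂ : K)) with hh | hh
        · exact absurd hh h₂
        · have e : (q₂ : K) - a = -(a - (q₂ : K)) := by ring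
          rw [e]; exact hh
      have h₁' : a - (q₁ : K) ∈ P := by
        rcases hP.2.2.2 ((q₁ : K) - a) with hh | hh
        · exact absurd hh h₁
        · have e : a - (q₁ : K) = -((q₁ : K) - a) := by ring
          rw [e]; exact hh
      exact ha (mem_ratHull_of_bounds hP h₁' h₂')
    rcases hcases with hc | hc
    · refine ⟨{Q : {P : Set K // IsOrdering P} | a - ((s + 1 : ℚ) : K) ∈ Q.1}, ?_,
        memOpen K _, hc _⟩
      rintro ⟨Q, hQ⟩ h1
      simp only [Set.mem_preimage]
      by_cases haQ : a ∈ ratHull Q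
      · rw [rPlace_def, if_pos haQ]
        apply hUr
        right
        have hge : ((s + 1 : ℚ) : ℝ) ≤ sSup (Sset Q a) :=
          le_csSup (sset_bddAbove hQ haQ) (mem_sset hQ h1)
        push_cast at hge ⊢
        linarith
      · rw [rPlace_def, if_neg haQ]
        exact hinf
    · refine ⟨{Q : {P : Set K // IsOrdering P} | ((r - 1 : ℚ) : K) - a ∈ Q.1}, ?_,
        memOpen K _, hc _⟩
      rintro ⟨Q, hQ⟩ h1
      simp only [Set.mem_preimage]
      by_cases haQ : a ∈ ratHull Q
      · rw [rPlace_def, if_pos haQ]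
        apply hUr
        left
        have hle : sSup (Sset Q a) ≤ ((r - 1 : ℚ) : ℝ) :=
          csSup_le (sset_nonempty hQ haQ) (sset_bddAbove_of hQ h1)
        push_cast at hle ⊢
        linarith
      · rw [rPlace_def, if_neg haQ]
        exact hinf

/-- Encoding of orderings as boolean-valued functions. -/
noncomputable def embBool (K : Type*) [Field K] : {P : Set K // IsOrdering P} → (K → Bool) :=
  fun P a => decide (a ∈ P.1)

theorem notMem_iff_neg_mem (hP : IsOrdering P) {b : K} (hb : b ≠ 0) :
    b ∉ P ↔ -b ∈ P := by
  constructor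
  · intro h
    rcases hP.2.2.2 b with hh | hh
    · exact absurd hh h
    · exact hh
  · intro h hb'
    exact not_mem_neg hP hb' hb h

theorem harrison_eq_induced (K : Type*) [Field K] :
    harrisonTopology K = TopologicalSpace.induced (embBool K) inferInstance := by
  apply le_antisymm
  · rw [← continuous_iff_le_induced (t₁ := harrisonTopology K)]
    letI := harrisonTopology K
    apply continuous_pi
    intro a
    rw [continuous_discrete_rng]
    intro b
    cases b with
    | true =>
      have e : (fun P : {P : Set K // IsOrdering P} => embBool K P a) ⁻¹' {true} =
          {P : {P : Set K // IsOrdering P} | a ∈ P.1} := by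
        ext Q; simp [embBool]
      rw [e]
      exact memOpen K a
    | false =>
      by_cases h0 : a = 0
      · subst h0
        have e : (fun P : {P : Set K // IsOrdering P} => embBool K P 0) ⁻¹' {false} =
            (∅ : Set {P : Set K // IsOrdering P}) := by
          ext Q; simp [embBool, zero_mem Q.2]
        rw [e]; exact isOpen_empty
      · have e : (fun P : {P : Set K // IsOrdering P} => embBool K P a) ⁻¹' {false} =
            {P : {P : Set K // IsOrdering P} | -a ∈ P.1} := by
          ext Q
          simp only [Set.mem_preimage, Set.mem_singleton_iff, Set.mem_setOf_eq, embBool]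
          rw [decide_eq_false_iff_not]
          exact notMem_iff_neg_mem Q.2 h0
        rw [e]
        exact memOpen K (-a)
  · apply le_generateFrom
    rintro S ⟨a, ha, rfl⟩
    have e : {P : {P : Set K // IsOrdering P} | a ∈ P.1} =
        embBool K ⁻¹' ((fun f : K → Bool => f a) ⁻¹' {true}) := by
      ext Q; simp [embBool]
    rw [e]
    exact isOpen_induced ((continuous_apply a).isOpen_preimage _ (isOpen_discrete _))

theorem range_embBool (K : Type*) [Field K] :
    Set.range (embBool K) = {f : K → Bool | IsOrdering {a | f a = true}} := by
  ext f
  constructor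
  · rintro ⟨⟨P, hP⟩, rfl⟩
    have e : {a : K | embBool K ⟨P, hP⟩ a = true} = P := by
      ext b; simp [embBool]
    simpa [e] using hP
  · intro hf
    refine ⟨⟨{a | f a = true}, hf⟩, ?_⟩
    funext b
    simp [embBool]

theorem range_embBool_closed (K : Type*) [Field K] :
    IsClosed (Set.range (embBool K)) := by
  rw [range_embBool]
  have e : {f : K → Bool | IsOrdering {a | f a = true}} =
      (⋂ (x : K) (y : K), {f : K → Bool | f x = true → f y = true → f (x + y) = true}) ∩
      ((⋂ (x : K) (y : K), {f : K → Bool | f x = true → f y = true → f (x * y) = true}) ∩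
      ({f : K → Bool | f (-1) = true}ᶜ ∩
      (⋂ (x : K), {f : K → Bool | f x = true ∨ f (-x) = true}))) := by
    ext f
    simp only [IsOrdering, Set.mem_setOf_eq, Set.mem_inter_iff, Set.mem_iInter,
      Set.mem_compl_iff]
    tauto
  rw [e]
  refine IsClosed.inter ?_ (IsClosed.inter ?_ (IsClosed.inter ?_ ?_))
  · refine isClosed_iInter fun x => isClosed_iInter fun y => ?_
    have : {f : K → Bool | f x = true → f y = true → f (x + y) = true} =
        (fun f : K → Bool => (f x, f y, f (x + y))) ⁻¹'
          {t : Bool × Bool × Bool | t.1 = true → t.2.1 = true → t.2.2 = true} := rfl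
    rw [this]
    exact (isClosed_discrete _).preimage
      ((continuous_apply x).prodMk ((continuous_apply y).prodMk (continuous_apply _)))
  · refine isClosed_iInter fun x => isClosed_iInter fun y => ?_
    have : {f : K → Bool | f x = true → f y = true → f (x * y) = true} =
        (fun f : K → Bool => (f x, f y, f (x * y))) ⁻¹'
          {t : Bool × Bool × Bool | t.1 = true → t.2.1 = true → t.2.2 = true} := rfl
    rw [this]
    exact (isClosed_discrete _).preimage
      ((continuous_apply x).prodMk ((continuous_apply y).prodMk (continuous_apply _)))
  · have e2 : {f : K → Bool | f (-1) = true} =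
        (fun f : K → Bool => f (-1)) ⁻¹' {true} := rfl
    rw [e2]
    exact ((isOpen_discrete ({true} : Set Bool)).preimage (continuous_apply (-1))).isClosed_compl
  · refine isClosed_iInter fun x => ?_
    have : {f : K → Bool | f x = true ∨ f (-x) = true} =
        (fun f : K → Bool => (f x, f (-x))) ⁻¹'
          {t : Bool × Bool | t.1 = true ∨ t.2 = true} := rfl
    rw [this]
    exact (isClosed_discrete _).preimage
      ((continuous_apply x).prodMk (continuous_apply _))

theorem compactSpace (K : Type*) [Field K] :
    @CompactSpace {P : Set K // IsOrdering P} (harrisonTopology K) := by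
  letI := harrisonTopology K
  have hind : Topology.IsInducing (embBool K) := ⟨harrison_eq_induced K⟩
  constructor
  rw [hind.isCompact_iff, Set.image_univ]
  exact (range_embBool_closed K).isCompact

end Stmt9Aux

/-- `Λ : χ(K) → M(K)` is continuous, closed and surjective. -/
theorem stmt9 (K : Type*) [Field K] :
    @Continuous _ _ (harrisonTopology K) _ (LambdaMap K) ∧
      @IsClosedMap _ _ (harrisonTopology K) _ (LambdaMap K) ∧
        Function.Surjective (LambdaMap K) := by
  letI := harrisonTopology K
  haveI : CompactSpace {P : Set K // IsOrdering P} := Stmt9Aux.compactSpace K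
  have hcont : Continuous (LambdaMap K) := by
    apply Continuous.subtype_mk
    exact continuous_pi fun a => Stmt9Aux.cont_component K a
  refine ⟨hcont, hcont.isClosedMap, ?_⟩
  rintro ⟨f, P, hP, rfl⟩
  exact ⟨⟨P, hP⟩, rfl⟩
end

section
/- Let K be a formally real field. The following are equivalent: (1) for every a ∈ K, a² ∈ ∑K⁴; (2) for every valuation subring A of K whose residue field is formally real, the value group of A is 2-divisible, i.e. every element of the quotient group Kˣ/Aˣ is a square; (3) K admits no order of exact level 2. -/
/-- An order of exact level `n` on a field `K`: a subset `P` with `0, 1 ∈ P`, `-1 ∉ P`,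
`P + P ⊆ P`, `P·P ⊆ P`, such that `P* = P \ {0}` is a subgroup of `Kˣ` with
`Kˣ/P* ≅ ℤ/2nℤ`. -/
def IsOrderOfExactLevel {K : Type*} [Field K] (P : Set K) (n : ℕ) : Prop :=
  (0 : K) ∈ P ∧ (1 : K) ∈ P ∧ (-1 : K) ∉ P ∧
    (∀ x ∈ P, ∀ y ∈ P, x + y ∈ P) ∧ (∀ x ∈ P, ∀ y ∈ P, x * y ∈ P) ∧
    ∃ H : Subgroup Kˣ, (∀ u : Kˣ, u ∈ H ↔ (u : K) ∈ P) ∧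
      Nonempty (Kˣ ⧸ H ≃* Multiplicative (ZMod (2 * n)))

/-!
(1 ⇒ 2) If `x² = ∑ fᵢ⁴` and `f_j` has the largest value, then `x² / f_j⁴ = ∑ ((fᵢ / f_j)²)²` is a
sum of squares in `A` with one term equal to `1`; since the residue field is real it is a unit,
so the class of `x` is the square of the class of `f_j`.

(2 ⇒ 3) Record an order `P` of exact level 2 by its signature `Kˣ → ℤ/4ℤ`, whose kernel is
`P*`. The elements bounded by rationals with respect to `P` form a valuation ring `A`. The key is
a halving argument: `z² - (z - q)² = 2q (z - q/2)`, where `-(z - q)²` is positive when `z - q`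
has odd signature. It shows that if `x` is unbounded then the signature of `x - c` does not depend
on `c ∈ ℚ`, which makes `x⁻¹` infinitesimal, and that bounded elements of odd signature are
infinitesimal. The latter makes the residue field of `A` real and prevents an element of
signature `1` from being a square times a unit of `A`.

(3 ⇒ 1) If `a² ∉ ∑K⁴`, take a subsemiring `S ⊇ ∑K⁴` maximal with `a² ∉ S`. Adjoining `y` with
`y² ∈ S` gives `S + yS`, and comparing the two representations `a² ∈ S ± yS` shows `y ∈ S ∪ -S`.
Hence `-a² ∈ S`, `Kˣ = S* ∪ -S* ∪ aS* ∪ -aS*`, and `S` is an order of exact level 2 with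
`Kˣ / S*` cyclic of order 4 generated by `a`.
-/

section SumsOfPowers

variable (R : Type*) [CommRing R] (n : ℕ)

def sumsOfPowersSubsemiring : Subsemiring R where
  carrier := sumsOfPowers R n
  zero_mem' := ⟨0, Fin.elim0, by simp⟩
  one_mem' := ⟨1, fun _ => 1, by simp⟩
  add_mem' := by
    rintro _ _ ⟨k, f, rfl⟩ ⟨l, g, rfl⟩
    exact ⟨k + l, Fin.append f g, by simp [Fin.sum_univ_add]⟩
  mul_mem' := by
    rintro _ _ ⟨k, f, rfl⟩ ⟨l, g, rfl⟩
    refine ⟨k * l, fun i => f (finProdFinEquiv.symm i).1 * g (finProdFinEquiv.symm i).2, ?_⟩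
    rw [Finset.sum_mul_sum, ← Finset.sum_product', Finset.univ_product_univ]
    exact Fintype.sum_equiv finProdFinEquiv _ _ fun p => by simp [mul_pow]

theorem pow_mem_sumsOfPowers (x : R) : x ^ n ∈ sumsOfPowers R n :=
  ⟨1, fun _ => x, by simp⟩

theorem sum_pow_mem_sumsOfPowers {ι : Type*} (s : Finset ι) (f : ι → R) :
    ∑ i ∈ s, f i ^ n ∈ sumsOfPowers R n :=
  (sumsOfPowersSubsemiring R n).sum_mem fun i _ => pow_mem_sumsOfPowers R n (f i)

variable {R n}

theorem charZero_of_neg_one_notMem_sumsOfPowers {K : Type*} [Field K]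
    (h : (-1 : K) ∉ sumsOfPowers K n) : CharZero K := by
  obtain ⟨p, hp⟩ := CharP.exists K
  rcases CharP.char_is_prime_or_zero K p with hprime | rfl
  · refine absurd ?_ h
    have hcast : ((p - 1 : ℕ) : K) = -1 := by
      rw [Nat.cast_sub hprime.one_le, CharP.cast_eq_zero, Nat.cast_one, zero_sub]
    exact hcast ▸ natCast_mem (sumsOfPowersSubsemiring K n) (p - 1)
  · exact CharP.charP_to_charZero K

end SumsOfPowers

theorem sum_sq_ne_zero {F ι : Type*} [Field F] (hF : (-1 : F) ∉ sumsOfPowers F 2)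
    {s : Finset ι} {f : ι → F} {j : ι} (hj : j ∈ s) (hfj : f j ≠ 0) : ∑ i ∈ s, f i ^ 2 ≠ 0 := by
  classical
  intro h
  rw [← Finset.add_sum_erase s _ hj] at h
  refine hF ?_
  convert sum_pow_mem_sumsOfPowers F 2 (s.erase j) (fun i => f i / f j) using 1
  simp only [div_pow, ← Finset.sum_div]
  field_simp
  linear_combination -h

theorem isUnit_sum_sq {R ι : Type*} [CommRing R] [IsLocalRing R]
    (hR : (-1 : IsLocalRing.ResidueField R) ∉ sumsOfPowers (IsLocalRing.ResidueField R) 2)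
    {s : Finset ι} {t : ι → R} {j : ι} (hj : j ∈ s) (ht : IsUnit (t j)) :
    IsUnit (∑ i ∈ s, t i ^ 2) := by
  rw [← IsLocalRing.residue_ne_zero_iff_isUnit] at ht ⊢
  simpa only [map_sum, map_pow] using sum_sq_ne_zero hR hj ht

theorem ValuationSubring.exists_mul_self_eq_mk {K : Type*} [Field K] (A : ValuationSubring K)
    (hA : (-1 : IsLocalRing.ResidueField A) ∉ sumsOfPowers (IsLocalRing.ResidueField A) 2)
    {x : Kˣ} (hx : (x : K) ^ 2 ∈ sumsOfPowers K 4) :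
    ∃ h : Kˣ ⧸ A.unitGroup, h * h = x := by
  obtain ⟨m, f, hf⟩ := hx
  have hm : Nonempty (Fin m) := by
    rcases m with _ | m
    · simp at hf
    · exact ⟨0⟩
  obtain ⟨j, hj⟩ := Finite.exists_max (A.valuation ∘ f)
  have hfj : f j ≠ 0 := by
    intro h0
    have hf0 : ∀ i, f i = 0 := fun i => by simpa [h0] using hj i
    simp [hf0] at hf
  have hmem : ∀ i, (f i / f j) ^ 2 ∈ A := fun i => by
    refine pow_mem ((A.valuation_le_one_iff _).1 ?_) 2
    rw [map_div₀]
    exact div_le_one_of_le₀ (hj i) zero_le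
  set t : Fin m → A := fun i => ⟨(f i / f j) ^ 2, hmem i⟩
  have hunit : IsUnit (∑ i, t i ^ 2) :=
    isUnit_sum_sq hA (Finset.mem_univ j) (by
      rw [show t j = 1 from Subtype.ext (by simp [t, hfj])]
      exact isUnit_one)
  have hsum : ((∑ i, t i ^ 2 : A) : K) = ((f j * f j)⁻¹ * x) ^ 2 := by
    push_cast [t]
    rw [mul_pow, hf, Finset.mul_sum]
    exact Finset.sum_congr rfl fun i _ => by field_simp
  refine ⟨QuotientGroup.mk (Units.mk0 (f j) hfj), ?_⟩
  rw [← QuotientGroup.mk_mul, QuotientGroup.eq, A.mem_unitGroup_iff]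
  have hv := (A.valuation_eq_one_iff _).1 hunit
  rw [hsum, map_pow] at hv
  simpa using (pow_eq_one_iff (n := 2)).1 hv

/-- An order `P` of exact level 2 on `K`, recorded through its signature: `P = {x | sign x = 0}`
and `sign` induces the isomorphism `Kˣ/P* ≅ ℤ/4ℤ`. -/
structure LevelTwoOrder (K : Type*) [Field K] where
  sign : K → ZMod 4
  sign_zero : sign 0 = 0
  sign_mul {x y : K} : x ≠ 0 → y ≠ 0 → sign (x * y) = sign x + sign y
  sign_neg_one : sign (-1) = 2
  exists_sign_eq_one : ∃ x ≠ 0, sign x = 1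
  sign_add {x y : K} : x ≠ 0 → y ≠ 0 → x + y ≠ 0 → sign x = 0 → sign y = 0 → sign (x + y) = 0

namespace LevelTwoOrder

variable {K : Type*} [Field K] (O : LevelTwoOrder K)

def IsPos (x : K) : Prop := x ≠ 0 ∧ O.sign x = 0

def IsOdd (x : K) : Prop := O.sign x = 1 ∨ O.sign x = 3

variable {O} {x y z : K}

theorem sign_one : O.sign 1 = 0 := by
  simpa using O.sign_mul (one_ne_zero (α := K)) one_ne_zero

theorem sign_inv (hx : x ≠ 0) : O.sign x⁻¹ = -O.sign x := by
  have h := O.sign_mul hx (inv_ne_zero hx)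
  rw [mul_inv_cancel₀ hx, sign_one] at h
  linear_combination -h

theorem sign_neg (hx : x ≠ 0) : O.sign (-x) = 2 + O.sign x := by
  rw [neg_eq_neg_one_mul, O.sign_mul (by norm_num) hx, O.sign_neg_one]

theorem isPos_one : O.IsPos 1 := ⟨one_ne_zero, sign_one⟩

theorem IsPos.mul (hx : O.IsPos x) (hy : O.IsPos y) : O.IsPos (x * y) :=
  ⟨mul_ne_zero hx.1 hy.1, by rw [O.sign_mul hx.1 hy.1, hx.2, hy.2, add_zero]⟩

theorem IsPos.inv (hx : O.IsPos x) : O.IsPos x⁻¹ :=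
  ⟨inv_ne_zero hx.1, by rw [sign_inv hx.1, hx.2, neg_zero]⟩

theorem IsPos.of_mul_left (hx : O.IsPos x) (h : O.IsPos (x * y)) : O.IsPos y := by
  simpa [hx.1] using hx.inv.mul h

theorem IsPos.not_neg (hx : O.IsPos x) : ¬O.IsPos (-x) := fun h => by
  have h2 := h.2
  rw [sign_neg hx.1, hx.2] at h2
  exact absurd h2 (by decide)

theorem IsPos.add (hx : O.IsPos x) (hy : O.IsPos y) : O.IsPos (x + y) := by
  have hxy : x + y ≠ 0 := fun h => hx.not_neg (by rwa [← eq_neg_of_add_eq_zero_right h])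
  exact ⟨hxy, O.sign_add hx.1 hy.1 hxy hx.2 hy.2⟩

theorem isPos_natCast {n : ℕ} (hn : n ≠ 0) : O.IsPos (n : K) := by
  induction n with
  | zero => exact absurd rfl hn
  | succ n ih =>
    rcases eq_or_ne n 0 with rfl | hn
    · simpa using isPos_one
    · simpa using (ih hn).add isPos_one

theorem isPos_ratCast {q : ℚ} (hq : 0 < q) : O.IsPos (q : K) := by
  rw [Rat.cast_def, div_eq_mul_inv]
  have hnum : q.num.natAbs ≠ 0 := by simpa using hq.ne'
  have hcast : ((q.num : ℤ) : K) = (q.num.natAbs : K) := by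
    rw [Nat.cast_natAbs, abs_of_pos (Rat.num_pos.2 hq)]
  rw [hcast]
  exact (isPos_natCast hnum).mul (isPos_natCast q.den_nz).inv

theorem IsPos.add_ratCast (hx : O.IsPos x) {q : ℚ} (hq : 0 ≤ q) : O.IsPos (x + q) := by
  rcases hq.eq_or_lt with rfl | hq
  · simpa using hx
  · exact hx.add (isPos_ratCast hq)

theorem IsOdd.ne_zero (hx : O.IsOdd x) : x ≠ 0 := by
  rintro rfl
  rcases hx with h | h <;> rw [O.sign_zero] at h <;> exact absurd h (by decide)

theorem IsOdd.neg (hx : O.IsOdd x) : O.IsOdd (-x) := by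
  unfold IsOdd
  rw [sign_neg hx.ne_zero]
  revert hx; unfold IsOdd; generalize O.sign x = a; revert a; decide

theorem isPos_or_isPos_neg_or_isOdd (hx : x ≠ 0) : O.IsPos x ∨ O.IsPos (-x) ∨ O.IsOdd x := by
  unfold IsPos IsOdd
  rw [sign_neg hx]
  simp only [hx, ne_eq, neg_eq_zero, not_false_eq_true, true_and]
  generalize O.sign x = a; revert a; decide

theorem IsOdd.isPos_neg_mul_self (hx : O.IsOdd x) : O.IsPos (-(x * x)) := by
  have hx0 := hx.ne_zero
  refine ⟨by simpa using hx0, ?_⟩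
  rw [sign_neg (mul_ne_zero hx0 hx0), O.sign_mul hx0 hx0]
  revert hx; unfold IsOdd; generalize O.sign x = a; revert a; decide

theorem isPos_mul_self (hx : x ≠ 0) (h : ¬O.IsOdd x) : O.IsPos (x * x) := by
  refine ⟨mul_ne_zero hx hx, ?_⟩
  rw [O.sign_mul hx hx]
  revert h; unfold IsOdd; generalize O.sign x = a; revert a; decide

theorem IsOdd.sign_add_ratCast (hy : O.IsOdd y) {q : ℚ} (hyq : O.IsOdd (y + q)) :
    O.sign (y + q) = O.sign y := by
  wlog hq : 0 < q generalizing y q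
  · rcases (not_lt.1 hq).eq_or_lt with rfl | hq
    · simp
    · have := this hyq (q := -q) (by simpa using hy) (neg_pos.2 hq)
      simp only [Rat.cast_neg, add_neg_cancel_right] at this
      exact this.symm
  by_contra hne
  have hsum : O.sign (y + q) + O.sign y = 0 := by
    revert hne hy hyq; unfold IsOdd
    generalize O.sign (y + q) = a; generalize O.sign y = b; revert a b; decide
  have h1 : O.IsPos ((y + q) * y) :=
    ⟨mul_ne_zero hyq.ne_zero hy.ne_zero, by rw [O.sign_mul hyq.ne_zero hy.ne_zero, hsum]⟩
  have h := h1.add hy.isPos_neg_mul_self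
  have hpos : O.IsPos y := (isPos_ratCast (O := O) hq).of_mul_left (by convert h using 1; ring)
  rcases hy with h' | h' <;> rw [hpos.2] at h' <;> exact absurd h' (by decide)

variable (O) in
def Bounded (x : K) : Prop := ∃ q : ℚ, 0 < q ∧ O.IsPos (q - x) ∧ O.IsPos (q + x)

variable (O) in
def Infinitesimal (x : K) : Prop := ∀ q : ℚ, 0 < q → O.IsPos (q - x) ∧ O.IsPos (q + x)

theorem Bounded.neg (hx : O.Bounded x) : O.Bounded (-x) := by
  obtain ⟨q, hq, h₁, h₂⟩ := hx
  exact ⟨q, hq, by rwa [sub_neg_eq_add], by rwa [← sub_eq_add_neg]⟩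

/-- `(a - x)(b + y) + (a + x)(b - y) = 2(ab - xy)` and
`(a - x)(b - y) + (a + x)(b + y) = 2(ab + xy)`. -/
theorem isPos_mul_sub_and_add {a b : K} (h₁ : O.IsPos (a - x)) (h₂ : O.IsPos (a + x))
    (h₃ : O.IsPos (b - y)) (h₄ : O.IsPos (b + y)) :
    O.IsPos (a * b - x * y) ∧ O.IsPos (a * b + x * y) := by
  have two : O.IsPos (2 : K) := by exact_mod_cast isPos_natCast two_ne_zero
  constructor
  · exact two.of_mul_left (by convert (h₁.mul h₄).add (h₂.mul h₃) using 1; ring)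
  · exact two.of_mul_left (by convert (h₁.mul h₃).add (h₂.mul h₄) using 1; ring)

theorem Infinitesimal.bounded (hx : O.Infinitesimal x) : O.Bounded x :=
  ⟨1, one_pos, hx 1 one_pos⟩

theorem Infinitesimal.neg (hx : O.Infinitesimal x) : O.Infinitesimal (-x) := fun q hq => by
  obtain ⟨h₁, h₂⟩ := hx q hq
  exact ⟨by rwa [sub_neg_eq_add], by rwa [← sub_eq_add_neg]⟩

section CharZero

variable [CharZero K]

theorem isPos_sub_half (hz : O.IsPos z) {q : ℚ} (hq : 0 < q) (hodd : O.IsOdd (z - q)) :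
    O.IsPos (z - (q / 2 : ℚ)) := by
  have h := (hz.mul hz).add hodd.isPos_neg_mul_self
  refine (isPos_ratCast (O := O) (by positivity : (0 : ℚ) < 2 * q)).of_mul_left ?_
  convert h using 1
  push_cast
  ring

theorem bounded_ratCast (c : ℚ) : O.Bounded c := by
  refine ⟨|c| + 1, by positivity, ?_, ?_⟩
  · convert isPos_ratCast (O := O) (by linarith [le_abs_self c] : 0 < |c| + 1 - c) using 1
    push_cast; ring
  · convert isPos_ratCast (O := O) (by linarith [neg_abs_le c] : 0 < |c| + 1 + c) using 1
    push_cast; ring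

theorem bounded_of_isPos_sub {d e : ℚ} (hd : O.IsPos (x - d)) (he : O.IsPos (e - x)) :
    O.Bounded x := by
  refine ⟨|d| + |e| + 1, by positivity, ?_, ?_⟩
  · convert he.add_ratCast (q := |d| + |e| + 1 - e) (by linarith [le_abs_self e, abs_nonneg d])
      using 1
    push_cast; ring
  · convert hd.add_ratCast (q := |d| + |e| + 1 + d) (by linarith [neg_abs_le d, abs_nonneg e])
      using 1
    push_cast; ring

theorem Bounded.add (hx : O.Bounded x) (hy : O.Bounded y) : O.Bounded (x + y) := by
  obtain ⟨q, hq, h₁, h₂⟩ := hx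
  obtain ⟨r, hr, h₃, h₄⟩ := hy
  refine ⟨q + r, by positivity, ?_, ?_⟩
  · convert h₁.add h₃ using 1; push_cast; ring
  · convert h₂.add h₄ using 1; push_cast; ring

theorem Bounded.mul (hx : O.Bounded x) (hy : O.Bounded y) : O.Bounded (x * y) := by
  obtain ⟨q, hq, h₁, h₂⟩ := hx
  obtain ⟨r, hr, h₃, h₄⟩ := hy
  exact ⟨q * r, by positivity, by exact_mod_cast isPos_mul_sub_and_add h₁ h₂ h₃ h₄⟩

theorem Infinitesimal.mul (hx : O.Infinitesimal x) (hy : O.Bounded y) :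
    O.Infinitesimal (x * y) := by
  obtain ⟨q, hq, h₁, h₂⟩ := hy
  intro r hr
  obtain ⟨h₃, h₄⟩ := hx (r / q) (by positivity)
  have key := isPos_mul_sub_and_add h₃ h₄ h₁ h₂
  rw [← Rat.cast_mul, div_mul_cancel₀ r hq.ne'] at key
  exact key

theorem Infinitesimal.not_bounded_inv (hx : O.Infinitesimal x) (hx0 : x ≠ 0) :
    ¬O.Bounded x⁻¹ := by
  rintro ⟨q, hq, h₁, h₂⟩
  obtain ⟨h₃, h₄⟩ := hx (1 / (2 * q)) (by positivity)
  have key := (isPos_mul_sub_and_add h₃ h₄ h₁ h₂).1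
  refine (isPos_ratCast (O := O) (by norm_num : (0 : ℚ) < 1 / 2)).not_neg ?_
  convert key using 1
  have hq0 : (q : K) ≠ 0 := by exact_mod_cast hq.ne'
  push_cast
  field_simp
  ring

theorem IsOdd.isPos_add_ratCast (hx : O.IsOdd x) {q r : ℚ} (hq : 0 < q) (h : O.IsPos (x + q))
    (hr : 0 < r) : O.IsPos (x + r) := by
  have halve : ∀ n : ℕ, O.IsPos (x + (q / 2 ^ n : ℚ)) := by
    intro n
    induction n with
    | zero => simpa using h
    | succ n ih =>
      have := isPos_sub_half ih (q := q / 2 ^ n) (by positivity) (by simpa using hx)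
      convert this using 2
      push_cast; ring
  obtain ⟨n, hn⟩ := exists_pow_lt_of_lt_one (div_pos hr hq) (by norm_num : (1 / 2 : ℚ) < 1)
  have hlt : q / 2 ^ n < r := by
    rw [div_pow, one_pow, lt_div_iff₀ hq] at hn
    rwa [div_eq_mul_one_div, mul_comm]
  convert (halve n).add_ratCast (sub_nonneg.2 hlt.le) using 1
  push_cast; ring

theorem IsOdd.infinitesimal (hx : O.IsOdd x) (hb : O.Bounded x) : O.Infinitesimal x := by
  obtain ⟨q, hq, h₁, h₂⟩ := hb
  intro r hr
  constructor
  · convert hx.neg.isPos_add_ratCast hq (by rwa [neg_add_eq_sub]) hr using 1; ring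
  · convert hx.isPos_add_ratCast hq (by rwa [add_comm]) hr using 1; ring

theorem sign_sub_ratCast_eq (hirr : ∀ c : ℚ, x ≠ c) (hU : ∀ c : ℚ, ¬O.IsPos (c - x)) (c : ℚ) :
    O.sign (x - c) = O.sign x := by
  have hodd : ∀ c : ℚ, ¬O.IsPos (x - c) → O.IsOdd (x - c) := fun c hc => by
    rcases isPos_or_isPos_neg_or_isOdd (sub_ne_zero.2 (hirr c)) with h | h | h
    · exact absurd h hc
    · exact absurd (by rwa [neg_sub] at h) (hU c)
    · exact h
  have hmono : ∀ c c' : ℚ, c' ≤ c → O.IsPos (x - c) → O.IsPos (x - c') := fun c c' hle h => by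
    convert h.add_ratCast (sub_nonneg.2 hle) using 1; push_cast; ring
  by_cases hD : ∃ c₀ : ℚ, O.IsPos (x - c₀)
  · obtain ⟨c₀, h₀⟩ := hD
    have hall : ∀ c : ℚ, O.IsPos (x - c) := by
      intro c
      by_contra hc
      have hlt : c₀ < c := lt_of_not_ge fun hle => hc (hmono c₀ c hle h₀)
      -- halve the gap between `c₀` and `2c - c₀`, which lies in the odd region beyond `c`
      have h₂ := hodd (2 * c - c₀) fun h => hc (hmono _ c (by linarith) h)
      have := isPos_sub_half h₀ (q := 2 * (c - c₀)) (by linarith)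
        (by convert h₂ using 1; push_cast; ring)
      exact hc (by convert this using 1; push_cast; ring)
    rw [(hall c).2, ← (hall 0).2, Rat.cast_zero, sub_zero]
  · push Not at hD
    have hx : O.IsOdd x := by simpa using hodd 0 (hD 0)
    simpa [sub_eq_add_neg] using
      hx.sign_add_ratCast (q := -c) (by simpa [sub_eq_add_neg] using hodd c (hD c))

theorem infinitesimal_inv_of_forall_not_isPos_sub (hirr : ∀ c : ℚ, x ≠ c)
    (hU : ∀ c : ℚ, ¬O.IsPos (c - x)) : O.Infinitesimal x⁻¹ := by
  have hx0 : x ≠ 0 := by simpa using hirr 0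
  have key : ∀ c : ℚ, O.IsPos (x⁻¹ * (x - c)) := fun c =>
    ⟨mul_ne_zero (inv_ne_zero hx0) (sub_ne_zero.2 (hirr c)), by
      rw [O.sign_mul (inv_ne_zero hx0) (sub_ne_zero.2 (hirr c)), sign_inv hx0,
        sign_sub_ratCast_eq hirr hU, neg_add_cancel]⟩
  intro r hr
  have hr0 : (r : K) ≠ 0 := by exact_mod_cast hr.ne'
  constructor
  · convert (isPos_ratCast hr).mul (key r⁻¹) using 1
    push_cast; field_simp
  · convert (isPos_ratCast hr).mul (key (-r⁻¹)) using 1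
    push_cast; field_simp; ring

theorem bounded_or_infinitesimal_inv (x : K) : O.Bounded x ∨ O.Infinitesimal x⁻¹ := by
  by_cases hrat : ∃ c : ℚ, x = c
  · obtain ⟨c, rfl⟩ := hrat
    exact .inl (bounded_ratCast c)
  push Not at hrat
  by_cases hU : ∃ e : ℚ, O.IsPos (e - x)
  · obtain ⟨e, he⟩ := hU
    by_cases hD : ∃ d : ℚ, O.IsPos (x - d)
    · obtain ⟨d, hd⟩ := hD
      exact .inl (bounded_of_isPos_sub hd he)
    · push Not at hD
      have hrat' : ∀ c : ℚ, -x ≠ c := fun c h => hrat (-c) (by push_cast; linear_combination -h)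
      have := infinitesimal_inv_of_forall_not_isPos_sub hrat' fun c h =>
        hD (-c) (by convert h using 1; push_cast; ring)
      exact .inr (by simpa [inv_neg] using this.neg)
  · push Not at hU
    exact .inr (infinitesimal_inv_of_forall_not_isPos_sub hrat hU)

variable (O) in
def valuationSubring : ValuationSubring K where
  carrier := {x | O.Bounded x}
  zero_mem' := by simpa using bounded_ratCast (O := O) 0
  one_mem' := by simpa using bounded_ratCast (O := O) 1
  add_mem' := Bounded.add
  mul_mem' := Bounded.mul
  neg_mem' := Bounded.neg
  mem_or_inv_mem' x := (bounded_or_infinitesimal_inv x).imp_right Infinitesimal.bounded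

theorem infinitesimal_of_not_isUnit {y : O.valuationSubring} (hy : ¬IsUnit y) :
    O.Infinitesimal y := by
  rcases eq_or_ne (y : K) 0 with h0 | h0
  · intro q hq
    simpa [h0] using And.intro (isPos_ratCast (O := O) hq) (isPos_ratCast (O := O) hq)
  rcases bounded_or_infinitesimal_inv (y : K)⁻¹ with hinv | hinf
  · exact absurd (IsUnit.of_mul_eq_one ⟨_, hinv⟩ (Subtype.ext (mul_inv_cancel₀ h0))) hy
  · simpa using hinf

theorem isPos_ratCast_add_sq (hy : O.Bounded y) {q : ℚ} (hq : 0 < q) : O.IsPos (q + y ^ 2) := by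
  rcases eq_or_ne y 0 with rfl | hy0
  · simpa using isPos_ratCast (O := O) hq
  by_cases hodd : O.IsOdd y
  · simpa [sq] using ((hodd.infinitesimal hy).mul hy q hq).2
  · simpa [sq, add_comm] using (isPos_mul_self hy0 hodd).add_ratCast hq.le

theorem isPos_ratCast_add_sum_sq {ι : Type*} (s : Finset ι) {f : ι → K}
    (hf : ∀ i ∈ s, O.Bounded (f i)) {q : ℚ} (hq : 0 < q) : O.IsPos (q + ∑ i ∈ s, f i ^ 2) := by
  classical
  induction s using Finset.induction_on generalizing q with
  | empty => simpa using isPos_ratCast (O := O) hq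
  | insert a s ha ih =>
    have h₁ := isPos_ratCast_add_sq (hf a (Finset.mem_insert_self a s)) (half_pos hq)
    have h₂ := ih (fun i hi => hf i (Finset.mem_insert_of_mem hi)) (half_pos hq)
    convert h₁.add h₂ using 1
    rw [Finset.sum_insert ha]
    push_cast; ring

theorem neg_one_notMem_sumsOfPowers_residueField :
    (-1 : IsLocalRing.ResidueField O.valuationSubring) ∉
      sumsOfPowers (IsLocalRing.ResidueField O.valuationSubring) 2 := by
  rintro ⟨m, F, hF⟩
  choose y hy using fun i => IsLocalRing.residue_surjective (F i)
  set Y : O.valuationSubring := 1 + ∑ i, y i ^ 2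
  have hY : ¬IsUnit Y := by
    rw [← IsLocalRing.residue_ne_zero_iff_isUnit, not_not]
    simp [Y, hy, ← hF]
  have h₁ := (infinitesimal_of_not_isUnit hY (1 / 2) (by norm_num)).1
  have h₂ := isPos_ratCast_add_sum_sq Finset.univ (f := fun i => (y i : K))
    (fun i _ => (y i).2) (q := 1 / 4) (by norm_num)
  refine (isPos_ratCast (O := O) (by norm_num : (0 : ℚ) < 1 / 4)).not_neg ?_
  convert h₁.add h₂ using 1
  push_cast [Y]
  ring

theorem not_exists_mul_self_eq_mk {g : Kˣ} (hg : O.IsOdd g) :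
    ¬∃ h : Kˣ ⧸ O.valuationSubring.unitGroup, h * h = g := by
  rintro ⟨h, hh⟩
  obtain ⟨w, rfl⟩ := QuotientGroup.mk_surjective h
  rw [← QuotientGroup.mk_mul, QuotientGroup.eq, ValuationSubring.mem_unitGroup_iff] at hh
  set u := (w * w)⁻¹ * g
  have hw : (w : K) ≠ 0 := w.ne_zero
  have hu : O.IsOdd u := by
    have hsign : O.sign u = -(O.sign w + O.sign w) + O.sign g := by
      simp only [u, Units.val_mul, Units.val_inv_eq_inv_val]
      rw [O.sign_mul (by simp [hw]) g.ne_zero, sign_inv (mul_ne_zero hw hw), O.sign_mul hw hw]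
    unfold IsOdd at hg ⊢
    rw [hsign]
    revert hg; generalize O.sign w = a; generalize O.sign (g : K) = b; revert a b; decide
  have hb : O.Bounded u := (O.valuationSubring.valuation_le_one_iff _).1 hh.le
  have hb' : O.Bounded (u : K)⁻¹ :=
    (O.valuationSubring.valuation_le_one_iff _).1 (by rw [map_inv₀, hh, inv_one])
  exact (hu.infinitesimal hb).not_bounded_inv u.ne_zero hb'

end CharZero

end LevelTwoOrder

theorem IsOrderOfExactLevel.nonempty_levelTwoOrder {K : Type*} [Field K] {P : Set K}
    (hP : IsOrderOfExactLevel P 2) : Nonempty (LevelTwoOrder K) := by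
  classical
  obtain ⟨-, -, hm1, hadd, -, H, hH, ⟨e⟩⟩ := hP
  let χ : Kˣ →* Multiplicative (ZMod 4) := e.toMonoidHom.comp (QuotientGroup.mk' H)
  let sign (x : K) : ZMod 4 := if hx : x = 0 then 0 else (χ (Units.mk0 x hx)).toAdd
  have hsign : ∀ u : Kˣ, sign u = (χ u).toAdd := fun u => by simp [sign]
  have hmemP : ∀ u : Kˣ, sign u = 0 ↔ (u : K) ∈ P := fun u => by
    rw [hsign, ← hH]
    simp [χ]
  have hmul : ∀ u v : Kˣ, sign (u * v) = sign u + sign v := fun u v => by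
    rw [← Units.val_mul, hsign, hsign, hsign, map_mul, toAdd_mul]
  refine ⟨⟨sign, by simp [sign], fun {x y} hx hy => ?_, ?_, ?_, fun {x y} hx hy hxy h₁ h₂ => ?_⟩⟩
  · exact hmul (Units.mk0 x hx) (Units.mk0 y hy)
  · have hne : sign (-1) ≠ 0 := by
      simpa using (hmemP (-1)).not.2 (by simpa using hm1)
    have hsq : sign (-1) + sign (-1) = 0 := by
      simpa using (hmul (-1) (-1)).symm.trans (by simpa using hsign 1)
    revert hne hsq; generalize sign (-1) = a; revert a; decide
  · obtain ⟨u, hu⟩ := QuotientGroup.mk_surjective (e.symm (.ofAdd 1))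
    exact ⟨u, u.ne_zero, by rw [hsign]; simp [χ, hu]⟩
  · rw [show x + y = (Units.mk0 _ hxy : K) from rfl, hmemP]
    rw [show x = (Units.mk0 _ hx : K) from rfl, hmemP] at h₁
    rw [show y = (Units.mk0 _ hy : K) from rfl, hmemP] at h₂
    exact hadd _ h₁ _ h₂

theorem Subsemiring.exists_maximal_notMem {R : Type*} [Semiring R] {T : Subsemiring R} {b : R}
    (hb : b ∉ T) : ∃ S : Subsemiring R, Maximal (fun S : Subsemiring R => T ≤ S ∧ b ∉ S) S := by
  have hchain : ∀ c ⊆ {S : Subsemiring R | T ≤ S ∧ b ∉ S}, IsChain (· ≤ ·) c →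
      ∀ S ∈ c, ∃ ub ∈ {S : Subsemiring R | T ≤ S ∧ b ∉ S}, ∀ S' ∈ c, S' ≤ ub := by
    intro c hc hchain S hS
    refine ⟨sSup c, ⟨(hc hS).1.trans (le_sSup hS), fun hmem => ?_⟩, fun _ => le_sSup⟩
    obtain ⟨S', hS', hbS'⟩ := (Subsemiring.mem_sSup_of_directedOn ⟨S, hS⟩ hchain.directedOn).1 hmem
    exact (hc hS').2 hbS'
  obtain ⟨S, -, hS⟩ := zorn_le_nonempty₀ _ hchain T ⟨le_rfl, hb⟩
  exact ⟨S, hS⟩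

/-- The subsemiring `S + y S`, which is `S[y]` since `y * y ∈ S`. -/
def Subsemiring.adjoinOfMulSelfMem {R : Type*} [CommSemiring R] (S : Subsemiring R) {y : R}
    (hy : y * y ∈ S) : Subsemiring R where
  carrier := {z | ∃ s ∈ S, ∃ t ∈ S, z = s + y * t}
  zero_mem' := ⟨0, S.zero_mem, 0, S.zero_mem, by simp⟩
  one_mem' := ⟨1, S.one_mem, 0, S.zero_mem, by simp⟩
  add_mem' := by
    rintro _ _ ⟨s, hs, t, ht, rfl⟩ ⟨s', hs', t', ht', rfl⟩
    exact ⟨s + s', S.add_mem hs hs', t + t', S.add_mem ht ht', by ring⟩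
  mul_mem' := by
    rintro _ _ ⟨s, hs, t, ht, rfl⟩ ⟨s', hs', t', ht', rfl⟩
    exact ⟨s * s' + y * y * (t * t'),
      S.add_mem (S.mul_mem hs hs') (S.mul_mem hy (S.mul_mem ht ht')), s * t' + t * s', S.add_mem (S.mul_mem hs ht') (S.mul_mem ht hs'), by ring⟩

section FourthPowers

variable {K : Type*} [Field K] {S : Subsemiring K}

theorem inv_mem_of_sumsOfPowers_four_le (hS : sumsOfPowersSubsemiring K 4 ≤ S) {s : K}
    (hs : s ∈ S) : s⁻¹ ∈ S := by
  rcases eq_or_ne s 0 with rfl | hs0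
  · simp
  rw [show s⁻¹ = s ^ 3 * s⁻¹ ^ 4 by field_simp]
  exact S.mul_mem (S.pow_mem hs 3) (hS (pow_mem_sumsOfPowers K 4 _))

/-- `48 x = (x + 2)⁴ - (x - 2)⁴ - 2 ((x + 1)⁴ - (x - 1)⁴)`. -/
theorem mem_of_neg_one_mem [CharZero K] (hS : sumsOfPowersSubsemiring K 4 ≤ S) (h : -1 ∈ S)
    (x : K) : x ∈ S := by
  have hpow : ∀ z : K, z ^ 4 ∈ S := fun z => hS (pow_mem_sumsOfPowers K 4 z)
  have hdiff : ∀ c : K, (x + c) ^ 4 + -1 * (x - c) ^ 4 ∈ S := fun c =>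
    S.add_mem (hpow _) (S.mul_mem h (hpow _))
  have h48 : (48 : K)⁻¹ ∈ S :=
    inv_mem_of_sumsOfPowers_four_le hS (by exact_mod_cast natCast_mem S 48)
  have h2 : (2 : K) ∈ S := by exact_mod_cast natCast_mem S 2
  have := S.mul_mem h48 (S.add_mem (hdiff 2) (S.mul_mem h (S.mul_mem h2 (hdiff 1))))
  convert this using 1
  field_simp
  ring

variable {b : K}
  (hS : Maximal (fun S : Subsemiring K => sumsOfPowersSubsemiring K 4 ≤ S ∧ b ∉ S) S)
include hS

theorem exists_eq_add_mul_of_maximal {y : K} (hy : y * y ∈ S) (hyS : y ∉ S) :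
    ∃ s ∈ S, ∃ t ∈ S, b = s + y * t := by
  by_contra hb
  have hle : S ≤ S.adjoinOfMulSelfMem hy := fun s hs => ⟨s, hs, 0, S.zero_mem, by simp⟩
  exact hyS (hS.2 ⟨hS.1.1.trans hle, hb⟩ hle ⟨0, S.zero_mem, 1, S.one_mem, by simp⟩)

variable [CharZero K]

theorem neg_one_notMem_of_maximal : (-1 : K) ∉ S := fun h =>
  hS.1.2 (mem_of_neg_one_mem hS.1.1 h b)

theorem eq_zero_of_mem_of_neg_mem_of_maximal {s : K} (hs : s ∈ S) (hs' : -s ∈ S) : s = 0 := by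
  by_contra hs0
  refine neg_one_notMem_of_maximal hS ?_
  simpa [hs0] using S.mul_mem hs' (inv_mem_of_sumsOfPowers_four_le hS.1.1 hs)

theorem mem_or_neg_mem_of_mul_self_mem {y : K} (hy : y * y ∈ S) : y ∈ S ∨ -y ∈ S := by
  by_contra! hyS
  obtain ⟨s, hs, t, ht, hb⟩ := exists_eq_add_mul_of_maximal hS hy hyS.1
  obtain ⟨s', hs', t', ht', hb'⟩ := exists_eq_add_mul_of_maximal hS (by simpa using hy) hyS.2
  have htt : t + t' ≠ 0 := fun h0 => by
    have ht0 := eq_zero_of_mem_of_neg_mem_of_maximal hS ht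
      (by rwa [← eq_neg_of_add_eq_zero_right h0])
    exact hS.1.2 (by rwa [hb, ht0, mul_zero, add_zero])
  -- eliminating `y` from `b = s + y t = s' - y t'` gives `(t + t') b = t' s + t s'`
  have hb'' : b = (t + t')⁻¹ * (t' * s + t * s') := by
    field_simp
    linear_combination t' * hb + t * hb'
  exact hS.1.2 (hb'' ▸ S.mul_mem (inv_mem_of_sumsOfPowers_four_le hS.1.1 (S.add_mem ht ht'))
    (S.add_mem (S.mul_mem ht' hs) (S.mul_mem ht hs')))

theorem neg_mul_self_mem_of_maximal {y : K} (hy : y ∉ S) (hy' : -y ∉ S) : -(y * y) ∈ S := by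
  have hsq : y * y ∉ S := fun h => (mem_or_neg_mem_of_mul_self_mem hS h).elim hy hy'
  refine (mem_or_neg_mem_of_mul_self_mem hS ?_).resolve_left hsq
  convert hS.1.1 (pow_mem_sumsOfPowers K 4 y) using 1
  ring

end FourthPowers

theorem isOrderOfExactLevel_two_of_maximal {K : Type*} [Field K] [CharZero K]
    {S : Subsemiring K} {a : K}
    (hS : Maximal (fun S : Subsemiring K => sumsOfPowersSubsemiring K 4 ≤ S ∧ a * a ∉ S) S) :
    IsOrderOfExactLevel (S : Set K) 2 := by
  have hinv : ∀ s ∈ S, s⁻¹ ∈ S := fun s => inv_mem_of_sumsOfPowers_four_le hS.1.1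
  have ha : a ∉ S := fun h => hS.1.2 (S.mul_mem h h)
  have ha' : -a ∉ S := fun h => hS.1.2 (by simpa using S.mul_mem h h)
  have ha0 : a ≠ 0 := fun h => ha (h ▸ S.zero_mem)
  have haa := neg_mul_self_mem_of_maximal hS ha ha'
  have hclass : ∀ y : K, y ∈ S ∨ -y ∈ S ∨ a⁻¹ * y ∈ S ∨ -(a⁻¹ * y) ∈ S := fun y => by
    by_contra! h
    have hy := neg_mul_self_mem_of_maximal hS h.1 h.2.1
    have : a⁻¹ * y * (a⁻¹ * y) ∈ S := by
      convert S.mul_mem hy (hinv _ haa) using 1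
      field_simp
    exact (mem_or_neg_mem_of_mul_self_mem hS this).elim h.2.2.1 h.2.2.2
  let H := S.toSubmonoid.units
  have hH : ∀ u : Kˣ, u ∈ H ↔ (u : K) ∈ S := fun u => by
    simp only [H, Submonoid.mem_units_iff, Units.val_inv_eq_inv_val]
    exact ⟨fun h => h.1, fun h => ⟨h, hinv _ h⟩⟩
  let c : Kˣ ⧸ H := Units.mk0 a ha0
  have hc : ∀ (k : ℕ) (u : Kˣ), c ^ k = u ↔ (a ^ k)⁻¹ * u ∈ S := fun k u => by
    rw [← QuotientGroup.mk_pow, QuotientGroup.eq, hH]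
    simp
  have hgen : ∀ g : Kˣ ⧸ H, g ∈ Subgroup.zpowers c := by
    intro g
    obtain ⟨u, rfl⟩ := QuotientGroup.mk_surjective g
    have hmem : ∃ k : ℕ, (a ^ k)⁻¹ * u ∈ S := by
      rcases hclass u with h | h | h | h
      · exact ⟨0, by simpa using h⟩
      · exact ⟨2, by convert S.mul_mem h (hinv _ haa) using 1; field_simp⟩
      · exact ⟨1, by simpa using h⟩
      · exact ⟨3, by convert S.mul_mem h (hinv _ haa) using 1; field_simp⟩
    obtain ⟨k, hk⟩ := hmem
    rw [← (hc k u).2 hk]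
    exact Subgroup.npow_mem_zpowers c k
  have horder : orderOf c = 2 ^ 2 := by
    refine orderOf_eq_prime_pow (fun h => hS.1.2 ?_) ((hc _ 1).2 ?_)
    · simpa [sq] using hinv _ ((hc 2 1).1 (by simpa using h))
    · simpa using hS.1.1 (pow_mem_sumsOfPowers K 4 a⁻¹)
  refine ⟨S.zero_mem, S.one_mem, neg_one_notMem_of_maximal hS, fun _ hx _ hy => S.add_mem hx hy,
    fun _ hx _ hy => S.mul_mem hx hy, H, hH, ⟨(zmodMulEquivOfGenerator hgen ?_).symm⟩⟩
  rw [← orderOf_eq_card_of_forall_mem_zpowers hgen, horder, sq]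

/-- Becker: for a formally real field `K`, the following are equivalent:
(1) every square is a sum of fourth powers;
(2) every real valuation of `K` has 2-divisible value group;
(3) `K` admits no order of exact level 2. -/
theorem stmt12 {K : Type*} [Field K] (hreal : (-1 : K) ∉ sumsOfPowers K 2) :
    List.TFAE
      [∀ a : K, a ^ 2 ∈ sumsOfPowers K 4,
        ∀ A : ValuationSubring K,
          ((-1 : IsLocalRing.ResidueField A) ∉ sumsOfPowers (IsLocalRing.ResidueField A) 2) →
            ∀ g : Kˣ ⧸ A.unitGroup, ∃ h : Kˣ ⧸ A.unitGroup, h * h = g,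
        ¬∃ P : Set K, IsOrderOfExactLevel P 2] := by
  have := charZero_of_neg_one_notMem_sumsOfPowers hreal
  tfae_have 1 → 2 := fun h A hA g => by
    obtain ⟨x, rfl⟩ := QuotientGroup.mk_surjective g
    exact A.exists_mul_self_eq_mk hA (h x)
  tfae_have 2 → 3 := by
    rintro h ⟨P, hP⟩
    obtain ⟨O⟩ := hP.nonempty_levelTwoOrder
    obtain ⟨g, hg0, hg⟩ := O.exists_sign_eq_one
    exact O.not_exists_mul_self_eq_mk (g := Units.mk0 g hg0) (.inl hg)
      (h _ O.neg_one_notMem_sumsOfPowers_residueField _)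
  tfae_have 3 → 1 := fun h a => by
    by_contra ha
    obtain ⟨S, hS⟩ := Subsemiring.exists_maximal_notMem (T := sumsOfPowersSubsemiring K 4)
      (b := a * a) (by rwa [← sq])
    exact h ⟨S, isOrderOfExactLevel_two_of_maximal hS⟩
  tfae_finish
end

section
/- Let K be a formally real field. Then the following three subsets of K coincide: (i) the intersection of all valuation subrings of K whose residue field is formally real; (ii) the intersection of A(P) over all orderings P of K; (iii) the set {a ∈ K | ∃ n ∈ ℕ, n ≥ 1, n + a ∈ ∑K² and n − a ∈ ∑K²}. (This common subring is the real holomorphy ring H(K).) -/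
/-!
For an ordering `P`, the elements `a` with `n - a² ∈ P` for some `n : ℕ` form a valuation ring
`A(P)` whose residue field is formally real, since `1 + t` is a unit of `A(P)` for `t ∈ P`; hence
(i) ⊆ (ii). If `a ∈ A(P)` for every ordering, then `n - a²` is a sum of squares for a single `n`:
otherwise the preorderings `∑K² + (a² - n)∑K²` form a chain whose union extends, by Zorn, to an
ordering in which `a² ≥ n` for all `n`. Then `n + 1 ± a` are sums of squares, because
`2 (n + 1 ± a) = (n - a²) + (a ± 1)² + (n + 1)`; hence (ii) ⊆ (iii). Finally, a valuation ring `A`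
with formally real residue field is convex for sums of squares: if `∑ fᵢ² ∈ A`, dividing by the
term of largest valuation gives `1 +` a sum of squares of elements of `A`, which is a unit, so every
`fᵢ ∈ A`. Applied to `a² + (n + a)(n - a) = n²` this gives (iii) ⊆ (i).
-/

open IsLocalRing

theorem mem_sumsOfPowers_two_iff {R : Type*} [CommRing R] {a : R} :
    a ∈ sumsOfPowers R 2 ↔ IsSumSq a := by
  refine ⟨?_, fun h => ?_⟩
  · rintro ⟨m, f, rfl⟩
    exact IsSumSq.sum_sq _ _
  · induction h with
    | zero => exact ⟨0, ![], by simp⟩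
    | sq_add x _ ih =>
      obtain ⟨m, f, rfl⟩ := ih
      exact ⟨m + 1, Fin.cons x f, by simp [Fin.sum_univ_succ, sq]⟩

namespace IsSumSq

variable {R S : Type*} [CommSemiring R] [CommSemiring S]

theorem map (f : R →+* S) {s : R} (hs : IsSumSq s) : IsSumSq (f s) := by
  induction hs with
  | zero => simp
  | sq_add a _ ih => simpa using ih.sq_add (f a)

theorem exists_isSumSq_map_eq {f : R →+* S} (hf : Function.Surjective f) {s : S}
    (hs : IsSumSq s) : ∃ t, IsSumSq t ∧ f t = s := by
  induction hs with
  | zero => exact ⟨0, .zero, map_zero f⟩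
  | sq_add a _ ih =>
    obtain ⟨t, ht, rfl⟩ := ih
    obtain ⟨b, rfl⟩ := hf a
    exact ⟨b * b + t, ht.sq_add b, by simp⟩

end IsSumSq

namespace RingPreordering

section CommRing

variable {R : Type*} [CommRing R]

variable (R) in
def sumSq [IsSemireal R] : RingPreordering R where
  toSubsemiring := Subsemiring.sumSq R
  mem_of_isSquare' hx := Subsemiring.mem_sumSq.2 hx.isSumSq
  neg_one_notMem' := by simpa using IsSemireal.not_isSumSq_neg_one R

@[simp]
theorem mem_sumSq [IsSemireal R] {a : R} : a ∈ sumSq R ↔ IsSumSq a := Subsemiring.mem_sumSq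

theorem isSemireal (P : RingPreordering R) : IsSemireal R :=
  .of_not_isSumSq_neg_one fun h => P.neg_one_notMem (mem_of_isSumSq h)

variable (P : RingPreordering R)

def boundedSubring : Subring R where
  carrier := {a | ∃ n : ℕ, (n : R) - a ^ 2 ∈ P}
  zero_mem' := ⟨0, by simp⟩
  one_mem' := ⟨1, by simp⟩
  neg_mem' := by
    rintro a ⟨n, ha⟩
    exact ⟨n, by rwa [neg_sq]⟩
  add_mem' := by
    rintro a b ⟨n, ha⟩ ⟨m, hb⟩
    refine ⟨2 * n + 2 * m, ?_⟩
    have : ((2 * n + 2 * m : ℕ) : R) - (a + b) ^ 2 =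
        2 * ((n : R) - a ^ 2) + 2 * ((m : R) - b ^ 2) + (a - b) ^ 2 := by
      push_cast; ring
    rw [this]
    exact add_mem (add_mem (mul_mem (ofNat_mem P 2) ha) (mul_mem (ofNat_mem P 2) hb))
      (P.pow_two_mem _)
  mul_mem' := by
    rintro a b ⟨n, ha⟩ ⟨m, hb⟩
    refine ⟨n * m, ?_⟩
    have : ((n * m : ℕ) : R) - (a * b) ^ 2 = n * ((m : R) - b ^ 2) + b ^ 2 * ((n : R) - a ^ 2) := by
      push_cast; ring
    rw [this]
    exact add_mem (mul_mem (natCast_mem P n) hb) (mul_mem (P.pow_two_mem b) ha)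

def iSupOfDirected {ι : Type*} [Nonempty ι] (P : ι → RingPreordering R)
    (hP : Directed (· ≤ ·) P) : RingPreordering R where
  toSubsemiring := ⨆ i, (P i).toSubsemiring
  mem_of_isSquare' hx := by
    obtain ⟨i⟩ := ‹Nonempty ι›
    exact le_iSup (fun i => (P i).toSubsemiring) i ((P i).mem_of_isSquare hx)
  neg_one_notMem' h := by
    obtain ⟨i, hi⟩ := (Subsemiring.mem_iSup_of_directed (hP.mono_comp _ fun _ _ => id)).1 h
    exact (P i).neg_one_notMem hi

theorem le_iSupOfDirected {ι : Type*} [Nonempty ι] (P : ι → RingPreordering R)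
    (hP : Directed (· ≤ ·) P) (i : ι) : P i ≤ iSupOfDirected P hP :=
  fun _ hx => le_iSup (fun i => (P i).toSubsemiring) i hx

end CommRing

section Field

variable {K : Type*} [Field K] (P : RingPreordering K)

theorem ratCast_mem {q : ℚ} (hq : 0 ≤ q) : (q : K) ∈ P := by
  rw [Rat.cast_def, ← Int.toNat_of_nonneg (Rat.num_nonneg.2 hq), Int.cast_natCast, div_eq_mul_inv]
  exact mul_mem (natCast_mem P _) (inv_mem (natCast_mem P _))

theorem inv_mem_boundedSubring {x : K} (hx : x ^ 2 - 1 ∈ P) : x⁻¹ ∈ P.boundedSubring := by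
  rcases eq_or_ne x 0 with rfl | hx0
  · simp
  refine ⟨1, ?_⟩
  have : (1 : K) - x⁻¹ ^ 2 = (x ^ 2 - 1) * x⁻¹ ^ 2 := by field_simp
  rw [Nat.cast_one, this]
  exact mul_mem hx (P.pow_two_mem _)

theorem mem_boundedSubring_iff_exists_add_mem_sub_mem {a : K} :
    a ∈ P.boundedSubring ↔ ∃ n : ℕ, (n : K) + a ∈ P ∧ (n : K) - a ∈ P := by
  have := P.isSemireal
  refine ⟨fun ⟨n, ha⟩ => ?_, fun ⟨n, hadd, hsub⟩ => ⟨n * n, ?_⟩⟩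
  · have key : ∀ b : K, (n : K) - b ^ 2 ∈ P → ((n + 1 : ℕ) : K) + b ∈ P := fun b hb => by
      have : ((n + 1 : ℕ) : K) + b = ((n - b ^ 2) + (b + 1) ^ 2 + (n + 1 : ℕ)) * 2⁻¹ := by
        push_cast; field_simp; ring
      rw [this]
      exact mul_mem (add_mem (add_mem hb (P.pow_two_mem _)) (natCast_mem P _))
        (inv_mem (ofNat_mem P 2))
    exact ⟨n + 1, key a ha, by simpa [← sub_eq_add_neg] using key (-a) (by rwa [neg_sq])⟩
  · have : ((n * n : ℕ) : K) - a ^ 2 = ((n : K) + a) * ((n : K) - a) := by push_cast; ring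
    rw [this]
    exact mul_mem hadd hsub

theorem mem_ratHull_iff {a : K} : a ∈ ratHull (P : Set K) ↔ a ∈ P.boundedSubring := by
  have := P.isSemireal
  rw [mem_boundedSubring_iff_exists_add_mem_sub_mem]
  refine ⟨fun ⟨r, hadd, hsub⟩ => ?_, fun ⟨n, hadd, hsub⟩ => ⟨n, ?_, ?_⟩⟩
  · have hr : ((⌈r⌉₊ - r : ℚ) : K) ∈ P := P.ratCast_mem (sub_nonneg.2 (Nat.le_ceil r))
    refine ⟨⌈r⌉₊, ?_, ?_⟩
    · convert add_mem hadd hr using 1; push_cast; ring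
    · convert add_mem hsub hr using 1; push_cast; ring
  · rwa [Rat.cast_natCast, add_comm]
  · rwa [Rat.cast_natCast]

variable {P}

def adjoin {t : K} (ht : -t ∉ P) : RingPreordering K :=
  mk' {x | ∃ p ∈ P, ∃ q ∈ P, x = p + t * q}
    (by
      rintro _ _ ⟨p, hp, q, hq, rfl⟩ ⟨p', hp', q', hq', rfl⟩
      exact ⟨p + p', add_mem hp hp', q + q', add_mem hq hq', by ring⟩)
    (by
      rintro _ _ ⟨p, hp, q, hq, rfl⟩ ⟨p', hp', q', hq', rfl⟩
      exact ⟨p * p' + t ^ 2 * (q * q'),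
        add_mem (mul_mem hp hp') (mul_mem (P.pow_two_mem t) (mul_mem hq hq')),
        p * q' + q * p', add_mem (mul_mem hp hq') (mul_mem hq hp'), by ring⟩)
    (fun x => ⟨x * x, P.mul_self_mem x, 0, zero_mem P, by ring⟩)
    (by
      rintro ⟨p, hp, q, hq, h⟩
      rcases eq_or_ne q 0 with rfl | hq0
      · exact P.neg_one_notMem (by simpa [h] using hp)
      · apply ht
        have : -t = (1 + p) * q⁻¹ := by field_simp; linear_combination h
        rw [this]
        exact mul_mem (add_mem (one_mem P) hp) (inv_mem hq))

theorem le_adjoin {t : K} (ht : -t ∉ P) : P ≤ adjoin ht :=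
  fun p hp => ⟨p, hp, 0, zero_mem P, by ring⟩

theorem self_mem_adjoin {t : K} (ht : -t ∉ P) : t ∈ adjoin ht :=
  ⟨0, zero_mem P, 1, one_mem P, by ring⟩

theorem adjoin_le_adjoin {t t' : K} (ht : -t ∉ P) (ht' : -t' ∉ P) (h : t - t' ∈ P) :
    adjoin ht ≤ adjoin ht' := by
  rintro _ ⟨p, hp, q, hq, rfl⟩
  exact ⟨p + (t - t') * q, add_mem hp (mul_mem h hq), q, hq, by ring⟩

theorem exists_le_hasMemOrNegMem (P : RingPreordering K) :
    ∃ Q, P ≤ Q ∧ HasMemOrNegMem Q := by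
  obtain ⟨Q, hPQ, hQ⟩ := zorn_le_nonempty_Ici₀ P (fun c _ hc Q hQ => by
    have : Nonempty c := ⟨⟨Q, hQ⟩⟩
    exact ⟨iSupOfDirected (fun Q : c => Q.1) hc.directed,
      fun Q hQ => le_iSupOfDirected (fun Q : c => Q.1) _ ⟨Q, hQ⟩⟩) P le_rfl
  refine ⟨Q, hPQ, ⟨fun x => ?_⟩⟩
  by_contra! h
  exact h.1 (hQ (le_adjoin h.2) (self_mem_adjoin h.2))

theorem mem_boundedSubring_of_forall_le (T : RingPreordering K) {a : K}
    (h : ∀ P : RingPreordering K, T ≤ P → HasMemOrNegMem P → a ∈ P.boundedSubring) :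
    a ∈ T.boundedSubring := by
  by_contra ha
  have hn (n : ℕ) : -(a ^ 2 - n) ∉ T := fun hn => ha ⟨n, by rwa [neg_sub] at hn⟩
  have hmono : Monotone fun n => adjoin (hn n) := fun n m hnm =>
    adjoin_le_adjoin _ _ <| by
      rw [sub_sub_sub_cancel_left, ← Nat.cast_sub hnm]
      exact natCast_mem T _
  obtain ⟨P, hUP, hP⟩ := (iSupOfDirected _ hmono.directed_le).exists_le_hasMemOrNegMem
  have hTP : ∀ n, adjoin (hn n) ≤ P := fun n => (le_iSupOfDirected _ _ n).trans hUP
  obtain ⟨m, hm⟩ := h P ((le_adjoin _).trans (hTP 0)) hP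
  have hm' : a ^ 2 - (m + 1 : ℕ) ∈ P := hTP (m + 1) (self_mem_adjoin _)
  exact P.neg_one_notMem (by convert add_mem hm hm' using 1; push_cast; ring)

end Field

section HasMemOrNegMem

variable {K : Type*} [Field K] (P : RingPreordering K) [HasMemOrNegMem P]

def valuationSubring : ValuationSubring K :=
  .ofSubring P.boundedSubring fun x => by
    rcases mem_or_neg_mem P (1 - x ^ 2) with h | h
    · exact .inl ⟨1, by simpa using h⟩
    · exact .inr (P.inv_mem_boundedSubring (by simpa using h))

instance : IsSemireal (ResidueField P.valuationSubring) where
  one_add_ne_zero {s} hs := by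
    obtain ⟨t, ht, rfl⟩ := hs.exists_isSumSq_map_eq residue_surjective
    have htP : (t : K) ∈ P := mem_of_isSumSq (ht.map P.valuationSubring.subtype)
    have hinv : ((1 + t : P.valuationSubring) : K)⁻¹ ∈ P.valuationSubring :=
      P.inv_mem_boundedSubring <| by
        convert add_mem (ofNat_mem P 2 |> (mul_mem · htP)) (P.pow_two_mem (t : K)) using 1
        push_cast; ring
    rw [← map_one (residue _), ← map_add, residue_ne_zero_iff_isUnit]
    refine .of_mul_eq_one ⟨_, hinv⟩ (Subtype.ext (mul_inv_cancel₀ fun h0 => ?_))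
    exact P.neg_one_notMem (by convert htP using 1; push_cast at h0; linear_combination -h0)

end HasMemOrNegMem

end RingPreordering

namespace IsOrdering

variable {R : Type*} [CommRing R] {P : Set R}

def toRingPreordering (hP : IsOrdering P) : RingPreordering R :=
  .mk' P (hP.1 _ · _ ·) (hP.2.1 _ · _ ·)
    (fun x => (hP.2.2.2 x).elim (fun h => hP.2.1 _ h _ h) fun h => by simpa using hP.2.1 _ h _ h)
    hP.2.2.1

instance (hP : IsOrdering P) : HasMemOrNegMem hP.toRingPreordering := ⟨hP.2.2.2⟩

theorem of_ringPreordering (P : RingPreordering R) [HasMemOrNegMem P] : IsOrdering (P : Set R) :=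
  ⟨fun _ hx _ hy => add_mem hx hy, fun _ hx _ hy => mul_mem hx hy, P.neg_one_notMem,
    mem_or_neg_mem P⟩

end IsOrdering

namespace ValuationSubring

variable {K : Type*} [Field K] (A : ValuationSubring K) [IsSemireal (ResidueField A)]

theorem mem_of_sum_sq_mem {ι : Type*} [Fintype ι] {f : ι → K} (h : ∑ i, f i ^ 2 ∈ A) (i : ι) :
    f i ∈ A := by
  classical
  by_contra hi
  have : Nonempty ι := ⟨i⟩
  obtain ⟨j, hj⟩ := Finite.exists_max fun k => A.valuation (f k)
  have hvj : 1 < A.valuation (f j) :=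
    (not_le.1 (mt (A.valuation_le_one_iff _).1 hi)).trans_le (hj i)
  have hfj : f j ≠ 0 := by rintro h; simp [h] at hvj
  have hg (k : ι) : f k / f j ∈ A := by
    rw [← valuation_le_one_iff, map_div₀]
    exact div_le_one_of_le₀ (hj k) zero_le
  let g (k : ι) : A := ⟨f k / f j, hg k⟩
  have hgj : g j = 1 := Subtype.ext (div_self hfj)
  have hsum : ((∑ k, g k ^ 2 : A) : K) = (∑ k, f k ^ 2) * (f j ^ 2)⁻¹ := by
    simp [g, Finset.sum_mul, div_eq_mul_inv, mul_pow, inv_pow]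
  have hm : ∑ k, g k ^ 2 ∈ maximalIdeal A := by
    rw [valuation_lt_one_iff, hsum, map_mul, map_inv₀, map_pow]
    calc A.valuation (∑ k, f k ^ 2) * (A.valuation (f j) ^ 2)⁻¹
        ≤ 1 * (A.valuation (f j) ^ 2)⁻¹ := by gcongr; exact (A.valuation_le_one_iff _).2 h
      _ < 1 := by rw [one_mul]; exact inv_lt_one_of_one_lt₀ (one_lt_pow₀ hvj two_ne_zero)
  refine IsSemireal.one_add_ne_zero (IsSumSq.sum_sq (Finset.univ.erase j)
    fun k => residue A (g k)) ?_
  rw [← (residue_eq_zero_iff _).2 hm, map_sum,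
    ← Finset.add_sum_erase _ _ (Finset.mem_univ j), hgj]
  simp

theorem mem_of_sq_add_mem {x s : K} (hs : IsSumSq s) (h : x ^ 2 + s ∈ A) : x ∈ A := by
  obtain ⟨m, f, rfl⟩ := mem_sumsOfPowers_two_iff.2 hs
  exact A.mem_of_sum_sq_mem (f := Fin.cons x f) (by simpa [Fin.sum_univ_succ] using h) 0

end ValuationSubring

section

variable {K : Type*} [Field K]

theorem IsOrdering.mem_ratHull_of_forall_mem_valuationSubring {P : Set K} (hP : IsOrdering P)
    {a : K} (ha : ∀ A : ValuationSubring K, IsSemireal (ResidueField A) → a ∈ A) :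
    a ∈ ratHull P :=
  hP.toRingPreordering.mem_ratHull_iff.2 <|
    ha hP.toRingPreordering.valuationSubring inferInstance

theorem exists_natCast_add_isSumSq_of_forall_mem_ratHull [IsSemireal K] {a : K}
    (ha : ∀ P : Set K, IsOrdering P → a ∈ ratHull P) :
    ∃ n : ℕ, 1 ≤ n ∧ IsSumSq ((n : K) + a) ∧ IsSumSq ((n : K) - a) := by
  have hT : a ∈ (RingPreordering.sumSq K).boundedSubring :=
    RingPreordering.mem_boundedSubring_of_forall_le _ fun P _ _ =>
      P.mem_ratHull_iff.1 (ha _ (.of_ringPreordering P))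
  obtain ⟨n, hadd, hsub⟩ := (RingPreordering.mem_boundedSubring_iff_exists_add_mem_sub_mem _).1 hT
  refine ⟨n + 1, Nat.le_add_left 1 n, ?_, ?_⟩
  · simpa [add_right_comm] using (RingPreordering.mem_sumSq.1 hadd).add .one
  · simpa [sub_add_eq_add_sub] using (RingPreordering.mem_sumSq.1 hsub).add .one

theorem ValuationSubring.mem_of_isSumSq_natCast_add_of_isSumSq_natCast_sub (A : ValuationSubring K)
    [IsSemireal (ResidueField A)] {n : ℕ} {a : K} (hadd : IsSumSq ((n : K) + a))
    (hsub : IsSumSq ((n : K) - a)) : a ∈ A :=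
  A.mem_of_sq_add_mem (hadd.mul hsub) (by convert natCast_mem A (n * n) using 1; push_cast; ring)

end

/-- The real holomorphy ring: for a formally real field `K`, the intersection of all valuation
subrings of `K` with formally real residue field equals the intersection of the rings `A(P)`
over all orderings `P`, and equals `{a | ∃ n ≥ 1, n + a ∈ ∑K² ∧ n - a ∈ ∑K²}`. -/
theorem stmt17 {K : Type*} [Field K] (hreal : (-1 : K) ∉ sumsOfPowers K 2) :
    (⋂ A ∈ {A : ValuationSubring K |
        (-1 : IsLocalRing.ResidueField A) ∉ sumsOfPowers (IsLocalRing.ResidueField A) 2},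
      (A : Set K)) = (⋂ P ∈ {P : Set K | IsOrdering P}, ratHull P) ∧
    (⋂ A ∈ {A : ValuationSubring K |
        (-1 : IsLocalRing.ResidueField A) ∉ sumsOfPowers (IsLocalRing.ResidueField A) 2},
      (A : Set K)) =
      {a : K | ∃ n : ℕ, 1 ≤ n ∧ (n : K) + a ∈ sumsOfPowers K 2 ∧
        (n : K) - a ∈ sumsOfPowers K 2} := by
  have : IsSemireal K := .of_not_isSumSq_neg_one (mt mem_sumsOfPowers_two_iff.2 hreal)
  simp_rw [mem_sumsOfPowers_two_iff, ← isSemireal_iff_not_isSumSq_neg_one]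
  have hSV {a : K} : (∃ n : ℕ, 1 ≤ n ∧ IsSumSq ((n : K) + a) ∧ IsSumSq ((n : K) - a)) →
      ∀ A : ValuationSubring K, IsSemireal (ResidueField A) → a ∈ A :=
    fun ⟨_, _, hadd, hsub⟩ A _ => A.mem_of_isSumSq_natCast_add_of_isSumSq_natCast_sub hadd hsub
  constructor <;> ext a <;> simp only [Set.mem_iInter₂, Set.mem_ofPred_eq, SetLike.mem_coe]
  · exact ⟨fun ha P hP => hP.mem_ratHull_of_forall_mem_valuationSubring ha,
      fun ha => hSV (exists_natCast_add_isSumSq_of_forall_mem_ratHull ha)⟩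
  · exact ⟨fun ha => exists_natCast_add_isSumSq_of_forall_mem_ratHull
      fun P hP => hP.mem_ratHull_of_forall_mem_valuationSubring ha, hSV⟩
end

section
/- Let K = ℝ((X)) be the field of formal Laurent series over ℝ. Then P₊ = {f² | f ∈ K} ∪ {X·f² | f ∈ K} and P₋ = {f² | f ∈ K} ∪ {−X·f² | f ∈ K} are orderings of K, and every ordering of K is equal to P₊ or to P₋. -/
/-- The variable `X` of the field `ℝ((X))` of formal Laurent series. -/
noncomputable def laurentX : LaurentSeries ℝ := HahnSeries.single 1 1

/-- `P₊ = K² ∪ X·K²`. -/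
noncomputable def Pplus : Set (LaurentSeries ℝ) :=
  {g | ∃ f : LaurentSeries ℝ, g = f ^ 2} ∪ {g | ∃ f : LaurentSeries ℝ, g = laurentX * f ^ 2}

/-- `P₋ = K² ∪ (-X)·K²`. -/
noncomputable def Pminus : Set (LaurentSeries ℝ) :=
  {g | ∃ f : LaurentSeries ℝ, g = f ^ 2} ∪ {g | ∃ f : LaurentSeries ℝ, g = -(laurentX * f ^ 2)}

/-! A nonzero `f ∈ ℝ((X))` is `X ^ n * u` with `u` a power series unit, and by Hensel's lemma
`u` is a square up to the sign of its constant term. Hence `f` lies in `P₊` exactly when its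
leading coefficient is positive, i.e. `P₊` is the nonnegative cone of the lexicographic order on
Hahn series, and `P₋` is its preimage under the automorphism `X ↦ -X`. Conversely, an ordering
contains all squares and one of `X`, `-X`, so it contains `P₊` or `P₋`; orderings of a field are
maximal for inclusion. -/

open PowerSeries in
theorem PowerSeries.exists_sq_eq_of_constantCoeff_eq_sq {R : Type*} [CommRing R]
    {φ : PowerSeries R} {s : R} (hs : IsUnit (2 * s))
    (h : constantCoeff φ = s ^ 2) : ∃ ψ : PowerSeries R, ψ ^ 2 = φ := by
  set f : Polynomial (PowerSeries R) := Polynomial.X ^ 2 - Polynomial.C φ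
  have hroot : f.eval (C s) ∈ Ideal.span {X} := by
    simp [f, Ideal.mem_span_singleton, X_dvd_iff, h]
  have hsimple : IsUnit (Ideal.Quotient.mk (Ideal.span {X}) (f.derivative.eval (C s))) := by
    refine IsUnit.map _ ?_
    simpa [f, isUnit_iff_constantCoeff, one_add_one_eq_two, map_ofNat] using hs
  obtain ⟨ψ, hψ, -⟩ := HenselianRing.is_henselian f
    (Polynomial.monic_X_pow_sub_C φ two_ne_zero) (C s) hroot hsimple
  exact ⟨ψ, by simpa [f, sub_eq_zero] using hψ⟩

open HahnSeries in
theorem LaurentSeries.exists_eq_single_order_mul_sq {R : Type*} [CommRing R]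
    (f : LaurentSeries R) {s : R} (hs : IsUnit (2 * s)) (h : f.leadingCoeff = s ^ 2) :
    ∃ g : LaurentSeries R, f = single f.order 1 * g ^ 2 := by
  obtain ⟨ψ, hψ⟩ := PowerSeries.exists_sq_eq_of_constantCoeff_eq_sq (φ := f.powerSeriesPart) hs
    (by rw [← PowerSeries.coeff_zero_eq_constantCoeff_apply, LaurentSeries.powerSeriesPart_coeff,
      Nat.cast_zero, add_zero, ← leadingCoeff_eq, h])
  refine ⟨ofPowerSeries ℤ R ψ, ?_⟩
  rw [← map_pow, hψ, LaurentSeries.single_order_mul_powerSeriesPart]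

open HahnSeries in
theorem LaurentSeries.exists_eq_sq_or_eq_single_one_mul_sq {R : Type*} [CommRing R]
    (f : LaurentSeries R) {s : R} (hs : IsUnit (2 * s)) (h : f.leadingCoeff = s ^ 2) :
    ∃ g : LaurentSeries R, f = g ^ 2 ∨ f = single 1 1 * g ^ 2 := by
  obtain ⟨g, hg⟩ := f.exists_eq_single_order_mul_sq hs h
  obtain ⟨k, hk | hk⟩ := f.order.even_or_odd'
  · refine ⟨single k 1 * g, Or.inl ?_⟩
    rw [hg, hk, mul_pow, single_pow, one_pow, two_nsmul, two_mul]
  · refine ⟨single k 1 * g, Or.inr ?_⟩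
    rw [hg, hk, mul_pow, single_pow, one_pow, ← mul_assoc, single_mul_single, one_mul,
      two_nsmul, two_mul, add_comm]

namespace LaurentSeries

variable {K : Type*} [Field K]

noncomputable def rescale (a : Kˣ) : LaurentSeries K →+* LaurentSeries K :=
  IsLocalization.map _ (PowerSeries.rescale (a : K))
    (nonZeroDivisors_le_comap_nonZeroDivisors_of_injective _
      (PowerSeries.rescale_injective a.ne_zero))

theorem rescale_coe (a : Kˣ) (φ : PowerSeries K) :
    rescale a (φ : LaurentSeries K) = (PowerSeries.rescale (a : K) φ : LaurentSeries K) :=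
  IsLocalization.map_eq _ _

theorem rescale_comp_rescale (a b : Kˣ) : (rescale b).comp (rescale a) = rescale (a * b) :=
  IsLocalization.ringHom_ext (nonZeroDivisors (PowerSeries K)) <| RingHom.ext fun φ => by
    simp [coe_algebraMap, rescale_coe, PowerSeries.rescale_rescale]

theorem rescale_one : rescale (1 : Kˣ) = RingHom.id (LaurentSeries K) :=
  IsLocalization.ringHom_ext (nonZeroDivisors (PowerSeries K)) <| RingHom.ext fun φ => by
    simp [coe_algebraMap, rescale_coe]

theorem rescale_neg_one_involutive : Function.Involutive (rescale (-1 : Kˣ)) := fun f => by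
  rw [← RingHom.comp_apply, rescale_comp_rescale, neg_one_mul, neg_neg, rescale_one,
    RingHom.id_apply]

theorem rescale_neg_one_single_one :
    rescale (-1) (HahnSeries.single 1 1) = -HahnSeries.single (1 : ℤ) (1 : K) := by
  rw [← PowerSeries.coe_X, rescale_coe, Units.val_neg, Units.val_one,
    PowerSeries.rescale_neg_one_X, PowerSeries.coe_neg]

end LaurentSeries

namespace IsOrdering

section CommRing

variable {K : Type*} [CommRing K] {P : Set K}

theorem sq_mem (hP : IsOrdering P) (x : K) : x ^ 2 ∈ P := by
  rcases hP.2.2.2 x with h | h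
  · exact pow_two x ▸ hP.2.1 x h x h
  · exact neg_sq x ▸ pow_two (-x) ▸ hP.2.1 _ h _ h

theorem mul_sq_mem (hP : IsOrdering P) {a : K} (ha : a ∈ P) (x : K) : a * x ^ 2 ∈ P :=
  hP.2.1 a ha _ (hP.sq_mem x)

theorem preimage {L : Type*} [CommRing L] {P : Set L} (hP : IsOrdering P) (f : K →+* L) :
    IsOrdering (f ⁻¹' P) := by
  obtain ⟨hadd, hmul, hneg, htot⟩ := hP
  refine ⟨fun x hx y hy => ?_, fun x hx y hy => ?_, ?_, fun x => ?_⟩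
  · simpa only [Set.mem_preimage, map_add] using hadd _ hx _ hy
  · simpa only [Set.mem_preimage, map_mul] using hmul _ hx _ hy
  · simpa only [Set.mem_preimage, map_neg, map_one] using hneg
  · simpa only [Set.mem_preimage, map_neg] using htot (f x)

end CommRing

theorem eq_of_subset {K : Type*} [Field K] {P Q : Set K} (hP : IsOrdering P) (hQ : IsOrdering Q)
    (h : Q ⊆ P) : P = Q := by
  refine Set.Subset.antisymm (fun f hf => ?_) h
  by_contra hfQ
  have hf0 : f ≠ 0 := by
    rintro rfl
    exact hfQ (zero_pow two_ne_zero (M₀ := K) ▸ hQ.sq_mem 0)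
  have hnegf : -f ∈ P := h ((hQ.2.2.2 f).resolve_left hfQ)
  have hneg : f * -f * f⁻¹ ^ 2 ∈ P := hP.mul_sq_mem (hP.2.1 f hf _ hnegf) _
  rw [show f * -f * f⁻¹ ^ 2 = -1 by field_simp] at hneg
  exact hP.2.2.1 hneg

end IsOrdering

theorem isOrdering_nonneg {R : Type*} [CommRing R] [LinearOrder R] [IsStrictOrderedRing R] :
    IsOrdering {x : R | 0 ≤ x} :=
  ⟨fun _ hx _ hy => add_nonneg hx hy, fun _ hx _ hy => mul_nonneg hx hy,
    (neg_one_lt_zero).not_ge, fun x => (le_total 0 x).imp_right neg_nonneg.mpr⟩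

theorem toLex_laurentX_pos : 0 < toLex laurentX :=
  HahnSeries.leadingCoeff_pos_iff.mp (by simp [laurentX, HahnSeries.leadingCoeff_of_single])

theorem mem_Pplus_iff {f : LaurentSeries ℝ} : f ∈ Pplus ↔ 0 ≤ toLex f := by
  refine ⟨?_, fun hf => ?_⟩
  · rintro (⟨g, rfl⟩ | ⟨g, rfl⟩)
    · exact sq_nonneg (toLex g)
    · exact mul_nonneg toLex_laurentX_pos.le (sq_nonneg (toLex g))
  rcases hf.eq_or_lt with hf0 | hpos
  · exact Or.inl ⟨0, by rw [zero_pow two_ne_zero]; exact hf0.symm⟩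
  have hlc : 0 < f.leadingCoeff := HahnSeries.leadingCoeff_pos_iff.mpr hpos
  obtain ⟨g, hg | hg⟩ := f.exists_eq_sq_or_eq_single_one_mul_sq (s := √f.leadingCoeff)
    (by simpa using Real.sqrt_ne_zero'.mpr hlc) (Real.sq_sqrt hlc.le).symm
  exacts [Or.inl ⟨g, hg⟩, Or.inr ⟨g, hg⟩]

theorem isOrdering_Pplus : IsOrdering Pplus := by
  rw [show Pplus = {f | 0 ≤ toLex f} from Set.ext fun _ => mem_Pplus_iff]
  exact isOrdering_nonneg (R := Lex (LaurentSeries ℝ))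

theorem Pminus_eq_preimage_Pplus : Pminus = LaurentSeries.rescale (-1) ⁻¹' Pplus := by
  set σ := LaurentSeries.rescale (K := ℝ) (-1)
  have hσX : σ laurentX = -laurentX := LaurentSeries.rescale_neg_one_single_one
  ext f
  constructor
  · rintro (⟨g, rfl⟩ | ⟨g, rfl⟩)
    · exact Or.inl ⟨σ g, map_pow σ g 2⟩
    · exact Or.inr ⟨σ g, by rw [map_neg, map_mul, map_pow, hσX, neg_mul, neg_neg]⟩
  · rintro (⟨g, hg⟩ | ⟨g, hg⟩)
    · exact Or.inl ⟨σ g, by rw [← map_pow, ← hg, LaurentSeries.rescale_neg_one_involutive]⟩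
    · refine Or.inr ⟨σ g, ?_⟩
      rw [← LaurentSeries.rescale_neg_one_involutive f, hg, map_mul, hσX, map_pow, neg_mul]

theorem isOrdering_Pminus : IsOrdering Pminus :=
  Pminus_eq_preimage_Pplus ▸ isOrdering_Pplus.preimage _

theorem Pplus_subset {P : Set (LaurentSeries ℝ)} (hP : IsOrdering P) (hX : laurentX ∈ P) :
    Pplus ⊆ P := by
  rintro _ (⟨g, rfl⟩ | ⟨g, rfl⟩)
  exacts [hP.sq_mem g, hP.mul_sq_mem hX g]

theorem Pminus_subset {P : Set (LaurentSeries ℝ)} (hP : IsOrdering P) (hX : -laurentX ∈ P) :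
    Pminus ⊆ P := by
  rintro _ (⟨g, rfl⟩ | ⟨g, rfl⟩)
  exacts [hP.sq_mem g, neg_mul laurentX _ ▸ hP.mul_sq_mem hX g]

/-- `P₊` and `P₋` are orderings of `ℝ((X))`, and they are the only ones. -/
theorem stmt18 :
    IsOrdering Pplus ∧ IsOrdering Pminus ∧
      ∀ P : Set (LaurentSeries ℝ), IsOrdering P → P = Pplus ∨ P = Pminus := by
  refine ⟨isOrdering_Pplus, isOrdering_Pminus, fun P hP => ?_⟩
  rcases hP.2.2.2 laurentX with hX | hX
  · exact Or.inl (hP.eq_of_subset isOrdering_Pplus (Pplus_subset hP hX))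
  · exact Or.inr (hP.eq_of_subset isOrdering_Pminus (Pminus_subset hP hX))
end
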